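/- arXiv:0705.4353 — 6 statements merged into one kernel-verified Lean document; each statement's English description precedes it below -/
import Mathlib

section
/- Every finite CMV matrix C = C(α₀,…,α_{n-2};β) of order n has a simple spectrum lying on the unit circle: its characteristic polynomial Φ̃_n(z) = det(zI − C) factors as Φ̃_n(z) = ∏_{j=1}^n (z − ζ_j) with ζ₁,…,ζ_n pairwise distinct points of 𝕋. -/
open Complex Polynomial Matrix BigOperators Finset

noncomputable section

namespace CMVPaper

/-- `ρ(α) = √(1 − |α|²)`. -/
def rhoC (a : ℂ) : ℝ := Real.sqrt (1 - ‖a‖ ^ 2)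

/-- The factor `L = Θ(α₀) ⊕ Θ(α₂) ⊕ …` of the CMV matrix, with a final `1×1` block
equal to `conj β` appended when `n` is odd. -/
def cmvL (n : ℕ) (α : ℕ → ℂ) (β : ℂ) : Matrix (Fin n) (Fin n) ℂ :=
  Matrix.of fun i j =>
    if Even (i : ℕ) then
      if (i : ℕ) = n - 1 then (if j = i then (starRingEnd ℂ) β else 0)
      else if j = i then (starRingEnd ℂ) (α (i : ℕ))
      else if (j : ℕ) = (i : ℕ) + 1 then ((rhoC (α (i : ℕ)) : ℝ) : ℂ)
      else 0
    else
      if (j : ℕ) + 1 = (i : ℕ) then ((rhoC (α ((i : ℕ) - 1)) : ℝ) : ℂ)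
      else if j = i then -α ((i : ℕ) - 1)
      else 0

/-- The factor `M = (1) ⊕ Θ(α₁) ⊕ Θ(α₃) ⊕ …` of the CMV matrix, with a final `1×1` block
equal to `conj β` appended when `n` is even. -/
def cmvM (n : ℕ) (α : ℕ → ℂ) (β : ℂ) : Matrix (Fin n) (Fin n) ℂ :=
  Matrix.of fun i j =>
    if (i : ℕ) = 0 then (if j = i then 1 else 0)
    else if Odd (i : ℕ) then
      if (i : ℕ) = n - 1 then (if j = i then (starRingEnd ℂ) β else 0)
      else if j = i then (starRingEnd ℂ) (α (i : ℕ))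
      else if (j : ℕ) = (i : ℕ) + 1 then ((rhoC (α (i : ℕ)) : ℝ) : ℂ)
      else 0
    else
      if (j : ℕ) + 1 = (i : ℕ) then ((rhoC (α ((i : ℕ) - 1)) : ℝ) : ℂ)
      else if j = i then -α ((i : ℕ) - 1)
      else 0

/-- The finite CMV matrix `C(α₀,…,α_{n-2};β) = L·M` of order `n`. -/
def CMVmat (n : ℕ) (α : ℕ → ℂ) (β : ℂ) : Matrix (Fin n) (Fin n) ℂ :=
  cmvL n α β * cmvM n α β

/-- Extension of a finite tuple of Verblunsky coefficients to a function on `ℕ`. -/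
def extFun {m : ℕ} (α : Fin m → ℂ) : ℕ → ℂ := fun k => if h : k < m then α ⟨k, h⟩ else 0

/-- The leading principal `k×k` submatrix of an `n×n` matrix (entries out of range set to `0`;
for `k ≤ n` this is the usual leading principal submatrix). -/
def leadPrincipal {n : ℕ} (M : Matrix (Fin n) (Fin n) ℂ) (k : ℕ) : Matrix (Fin k) (Fin k) ℂ :=
  Matrix.of fun i j =>
    if hi : (i : ℕ) < n then if hj : (j : ℕ) < n then M ⟨i, hi⟩ ⟨j, hj⟩ else 0 else 0

/-- The Szegő polynomial `Φ_k(z) = det (z·I_k − C^{(k)})`, the characteristic polynomial of the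
leading principal `k×k` submatrix of the CMV matrix `C(α;β)` of order `n`. -/
def PhiPoly (n : ℕ) (α : ℕ → ℂ) (β : ℂ) (k : ℕ) : Polynomial ℂ :=
  Matrix.charpoly (leadPrincipal (CMVmat n α β) k)

/-- The `*`-transform of a polynomial of degree (at most) `k`:
`P*(z) = z^k · conj (P (1/conj z))`, i.e. coefficientwise `(P*)_j = conj (P_{k-j})`. -/
def starPoly (k : ℕ) (p : Polynomial ℂ) : Polynomial ℂ :=
  Polynomial.reflect k (p.map (starRingEnd ℂ))

/-- The standard inner product `⟨u, v⟩ = ∑ u_i conj (v_i)` on `ℂⁿ`. -/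
def innerC {n : ℕ} (u v : Fin n → ℂ) : ℂ := ∑ i, u i * (starRingEnd ℂ) (v i)

/-- The last standard basis vector `e_n` of `ℂⁿ`. -/
def lastVec (n : ℕ) : Fin n → ℂ := fun i => if (i : ℕ) = n - 1 then 1 else 0

/-- The Weyl function `w(z) = ⟨(zI − C)⁻¹ e_n, e_n⟩`. -/
def weylFn {n : ℕ} (M : Matrix (Fin n) (Fin n) ℂ) (z : ℂ) : ℂ :=
  innerC ((z • (1 : Matrix (Fin n) (Fin n) ℂ) - M)⁻¹ *ᵥ lastVec n) (lastVec n)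

/-- The spectrum of a matrix, as the zero set of its characteristic polynomial. -/
def specSet {n : ℕ} (M : Matrix (Fin n) (Fin n) ℂ) : Set ℂ :=
  {z : ℂ | (Matrix.charpoly M).eval z = 0}

/-- Two `m`-point subsets of the unit circle interlace: labeling each as
`{e^{i x_{j,l}}}` with `0 ≤ x_{1,l} < … < x_{m,l} < 2π`, possibly after swapping the
two sets, `x_{1,1} < x_{1,2} < x_{2,1} < x_{2,2} < … < x_{m,1} < x_{m,2}`. -/
def InterlaceOnT (m : ℕ) (Z₁ Z₂ : Set ℂ) : Prop :=
  ∃ x₁ x₂ : Fin m → ℝ,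
    (∀ j, 0 ≤ x₁ j ∧ x₁ j < 2 * Real.pi) ∧
    (∀ j, 0 ≤ x₂ j ∧ x₂ j < 2 * Real.pi) ∧
    StrictMono x₁ ∧ StrictMono x₂ ∧
    Z₁ = Set.range (fun j => Complex.exp (Complex.I * (x₁ j : ℂ))) ∧
    Z₂ = Set.range (fun j => Complex.exp (Complex.I * (x₂ j : ℂ))) ∧
    ((∀ j : Fin m, x₁ j < x₂ j ∧ ∀ h : (j : ℕ) + 1 < m, x₂ j < x₁ ⟨(j : ℕ) + 1, h⟩) ∨
     (∀ j : Fin m, x₂ j < x₁ j ∧ ∀ h : (j : ℕ) + 1 < m, x₁ j < x₂ ⟨(j : ℕ) + 1, h⟩))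

/-!
`C = L M` is a product of unitary block-diagonal matrices (each `Θ(α)` is unitary since
`|α|² + ρ² = 1`), so `C` is unitary: its eigenvalues lie on `𝕋`, and since `C` is normal, the
multiplicity of each root of its characteristic polynomial is the dimension of the eigenspace.
That dimension is at most one: as every `ρ_j ≠ 0`, an eigenvector `v` with `v₀ = 0` vanishes.
Indeed, with `u = M v` and `L u = μ v`, the `Θ`-blocks of `L` and of `M` alternately carry
`u_k = v_k = 0` over to `u_{k+1} = v_{k+1} = 0`.
-/

end CMVPaper

namespace Matrix

variable {ι : Type*} [Fintype ι]

open scoped ComplexOrder in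
/-- For a normal `N`, `‖Nᴴ y‖ = ‖N y‖`; applied to `y = N x` this gives `ker N² = ker N`. -/
lemma mulVec_eq_zero_of_mulVec_mulVec_eq_zero {N : Matrix ι ι ℂ} [hN : IsStarNormal N]
    {x : ι → ℂ} (h : N *ᵥ (N *ᵥ x) = 0) : N *ᵥ x = 0 := by
  set y := N *ᵥ x
  have hNy : Nᴴ *ᵥ y = 0 := by
    refine dotProduct_star_self_eq_zero.mp ?_
    rw [star_mulVec, conjTranspose_conjTranspose, ← dotProduct_mulVec, mulVec_mulVec,
      ← star_eq_conjTranspose, ← hN.star_comm_self.eq, ← mulVec_mulVec, h, mulVec_zero,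
      dotProduct_zero]
  have hyN : star y ᵥ* N = 0 := by
    simpa only [star_mulVec, conjTranspose_conjTranspose, star_zero] using congrArg star hNy
  refine dotProduct_star_self_eq_zero.mp ?_
  rw [dotProduct_mulVec, hyN, zero_dotProduct]

lemma maxGenEigenspace_toLin'_eq_eigenspace [DecidableEq ι] (A : Matrix ι ι ℂ) [IsStarNormal A]
    (μ : ℂ) :
    Module.End.maxGenEigenspace (toLin' A) μ = Module.End.eigenspace (toLin' A) μ := by
  have : IsStarNormal (A - μ • 1) := Commute.isStarNormal_sub <| by
    rw [star_smul, star_one]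
    exact (Commute.one_right A).smul_right _
  have hφ : toLin' A - μ • 1 = toLin' (A - μ • 1) := by
    rw [map_sub, map_smul, toLin'_one]; rfl
  refine le_antisymm (fun x hx => ?_) Module.End.eigenspace_le_maxGenEigenspace
  rw [Module.End.mem_maxGenEigenspace, hφ] at hx
  rw [Module.End.mem_eigenspace_iff, ← sub_eq_zero]
  change (toLin' A - μ • 1) x = 0
  rw [hφ]
  obtain ⟨k, hk⟩ := hx
  induction k generalizing x with
  | zero => simp_all
  | succ k ih =>
    rw [pow_succ, Module.End.mul_apply] at hk
    have := ih _ hk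
    rw [toLin'_apply, toLin'_apply] at *
    exact mulVec_eq_zero_of_mulVec_mulVec_eq_zero this

lemma rootMultiplicity_charpoly_eq_finrank_eigenspace [DecidableEq ι] (A : Matrix ι ι ℂ)
    [IsStarNormal A] (μ : ℂ) :
    A.charpoly.rootMultiplicity μ = Module.finrank ℂ (Module.End.eigenspace (toLin' A) μ) := by
  rw [← charpoly_toLin', ← LinearMap.finrank_maxGenEigenspace_eq,
    maxGenEigenspace_toLin'_eq_eigenspace]

open scoped Matrix.Norms.L2Operator in
lemma norm_eq_one_of_isRoot_charpoly [DecidableEq ι] {U : Matrix ι ι ℂ}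
    (hU : U ∈ unitary (Matrix ι ι ℂ)) {r : ℂ} (hr : U.charpoly.IsRoot r) : ‖r‖ = 1 :=
  spectrum.norm_eq_one_of_unitary hU (mem_spectrum_iff_isRoot_charpoly.mpr hr)

end Matrix

theorem Polynomial.exists_injective_eq_prod_X_sub_C {K : Type*} [Field K] [IsAlgClosed K]
    {p : K[X]} {n : ℕ} (hp : p.Monic) (hdeg : p.natDegree = n)
    (hsimple : ∀ r, p.rootMultiplicity r ≤ 1) :
    ∃ ζ : Fin n → K, Function.Injective ζ ∧ (∀ j, p.IsRoot (ζ j)) ∧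
      p = ∏ j, (X - C (ζ j)) := by
  classical
  have hnodup : p.roots.Nodup :=
    Multiset.nodup_iff_count_le_one.mpr fun r => (count_roots p).trans_le (hsimple r)
  have hcard : p.roots.card = n :=
    (splits_iff_card_roots.mp (IsAlgClosed.splits p)).trans hdeg
  set s := p.roots.toFinset
  have hs : s.val = p.roots := by rw [Multiset.toFinset_val, Multiset.dedup_eq_self.mpr hnodup]
  let e : Fin n ≃ s :=
    (s.equivFin.trans (finCongr (by rw [Multiset.toFinset_card_of_nodup hnodup, hcard]))).symm
  refine ⟨fun j => e j, Subtype.val_injective.comp e.injective, fun j => ?_, ?_⟩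
  · exact (mem_roots hp.ne_zero).mp (Multiset.mem_toFinset.mp (e j).2)
  · conv_lhs => rw [← prod_multiset_X_sub_C_of_monic_of_roots_card_eq hp (hcard.trans hdeg.symm)]
    rw [← hs, ← Finset.prod_eq_multiset_prod, ← Finset.prod_coe_sort,
      ← e.prod_comp (fun a : s => X - C (a : K))]

namespace CMVPaper

section ThetaBlock

variable {ι : Type*} [DecidableEq ι]

lemma rhoC_mul_self_add_mul_conj {a : ℂ} (ha : ‖a‖ < 1) :
    (rhoC a : ℂ) * rhoC a + a * starRingEnd ℂ a = 1 := by
  have h : rhoC a ^ 2 = 1 - ‖a‖ ^ 2 := Real.sq_sqrt (by nlinarith [norm_nonneg a])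
  rw [Complex.mul_conj, Complex.normSq_eq_norm_sq, ← Complex.ofReal_mul, ← sq, h]
  push_cast
  ring

lemma rhoC_ne_zero {a : ℂ} (ha : ‖a‖ < 1) : (rhoC a : ℂ) ≠ 0 :=
  Complex.ofReal_ne_zero.mpr (Real.sqrt_pos.mpr (by nlinarith [norm_nonneg a])).ne'

/-- Rows `i₀, i₁` of `A` are the block `Θ(a) = [[conj a, ρ], [ρ, -a]]` in columns `i₀, i₁`. -/
def IsThetaRows (A : Matrix ι ι ℂ) (i₀ i₁ : ι) (a : ℂ) : Prop :=
  A i₀ = Pi.single i₀ (starRingEnd ℂ a) + Pi.single i₁ (rhoC a : ℂ) ∧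
    A i₁ = Pi.single i₀ (rhoC a : ℂ) + Pi.single i₁ (-a)

namespace IsThetaRows

variable {A : Matrix ι ι ℂ} {i₀ i₁ : ι} {a : ℂ}

lemma dotProduct_star [Fintype ι] (hA : IsThetaRows A i₀ i₁ a) (hne : i₀ ≠ i₁) (ha : ‖a‖ < 1)
    {i j : ι} (hi : i = i₀ ∨ i = i₁) (hj : j = i₀ ∨ j = i₁) :
    A i ⬝ᵥ star (A j) = (1 : Matrix ι ι ℂ) i j := by
  have hρ := rhoC_mul_self_add_mul_conj ha
  obtain ⟨h₀, h₁⟩ := hA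
  rcases hi with rfl | rfl <;> rcases hj with rfl | rfl <;>
    simp only [h₀, h₁, star_add, ← Pi.single_star, add_dotProduct, dotProduct_add,
      single_dotProduct, Pi.single_apply, one_apply, hne, hne.symm, if_true, if_false,
      Complex.star_def, Complex.conj_conj, Complex.conj_ofReal, map_neg]
  · linear_combination hρ
  · ring
  · ring
  · linear_combination hρ

lemma eq_or_eq_of_ne_zero (hA : IsThetaRows A i₀ i₁ a) {i k : ι} (hi : i = i₀ ∨ i = i₁)
    (hk : A i k ≠ 0) : k = i₀ ∨ k = i₁ := by
  obtain ⟨h₀, h₁⟩ := hA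
  contrapose! hk
  rcases hi with rfl | rfl <;> simp [h₀, h₁, hk.1, hk.2]

lemma mulVec_apply_eq_zero [Fintype ι] (hA : IsThetaRows A i₀ i₁ a) (ha : ‖a‖ < 1) {x : ι → ℂ}
    (hx : x i₀ = 0) (hAx : (A *ᵥ x) i₀ = 0) : x i₁ = 0 ∧ (A *ᵥ x) i₁ = 0 := by
  obtain ⟨h₀, h₁⟩ := hA
  have hrow : ∀ i, (A *ᵥ x) i = A i ⬝ᵥ x := fun _ => rfl
  rw [hrow, h₀, add_dotProduct, single_dotProduct, single_dotProduct, hx, mul_zero,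
    zero_add] at hAx
  have hx₁ : x i₁ = 0 := (mul_eq_zero.mp hAx).resolve_left (rhoC_ne_zero ha)
  refine ⟨hx₁, ?_⟩
  rw [hrow, h₁, add_dotProduct, single_dotProduct, single_dotProduct, hx, hx₁]
  ring

end IsThetaRows

theorem mul_conjTranspose_eq_one_of_blocks [Fintype ι] {κ : Type*} {A : Matrix ι ι ℂ} (b : ι → κ)
    (hblock : ∀ i, (∃ c : ℂ, ‖c‖ = 1 ∧ A i = Pi.single i c ∧ ∀ j, b j = b i → j = i) ∨
      ∃ i₀ i₁ a, ‖a‖ < 1 ∧ i₀ ≠ i₁ ∧ IsThetaRows A i₀ i₁ a ∧ (i = i₀ ∨ i = i₁) ∧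
        ∀ j, b j = b i ↔ j = i₀ ∨ j = i₁) :
    A * Aᴴ = 1 := by
  have hsupp : ∀ i k, A i k ≠ 0 → b k = b i := by
    intro i k hk
    rcases hblock i with ⟨c, -, hc, -⟩ | ⟨i₀, i₁, a, -, -, hA, hi, hb⟩
    · rw [hc, Pi.single_apply] at hk
      rw [of_not_not fun h : k ≠ i => hk (if_neg h)]
    · exact (hb k).mpr (hA.eq_or_eq_of_ne_zero hi hk)
  ext i j
  rw [mul_apply']
  change A i ⬝ᵥ star (A j) = _
  by_cases hij : b j = b i
  · rcases hblock i with ⟨c, hc, hAi, hb⟩ | ⟨i₀, i₁, a, ha, hne, hA, hi, hb⟩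
    · obtain rfl := hb j hij
      rw [hAi, ← Pi.single_star, single_dotProduct, Pi.single_eq_same, one_apply_eq,
        Complex.star_def, Complex.mul_conj, Complex.normSq_eq_norm_sq, hc]
      norm_num
    · exact hA.dotProduct_star hne ha hi ((hb j).mp hij)
  · rw [one_apply_ne fun h => hij (by rw [h])]
    refine Finset.sum_eq_zero fun k _ => ?_
    by_cases hik : A i k = 0
    · rw [hik, zero_mul]
    · have hjk : A j k = 0 := by_contra fun h => hij ((hsupp j k h).symm.trans (hsupp i k hik))
      rw [Pi.star_apply, hjk, star_zero, mul_zero]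

end ThetaBlock

section CMV

variable {n : ℕ} {α : ℕ → ℂ} {β : ℂ}

lemma cmvL_row_of_eq_last {i : Fin n} (hi : Even (i : ℕ)) (hl : (i : ℕ) = n - 1) :
    cmvL n α β i = Pi.single i (starRingEnd ℂ β) := by
  ext k
  simp only [cmvL, of_apply, if_pos hi, if_pos hl, Pi.single_apply]

lemma isThetaRows_cmvL {i₀ i₁ : Fin n} (hi₀ : Even (i₀ : ℕ)) (hi₁ : (i₁ : ℕ) = i₀ + 1) :
    IsThetaRows (cmvL n α β) i₀ i₁ (α i₀) := by
  have hodd : ¬ Even (i₁ : ℕ) := by rw [hi₁, Nat.even_add_one]; exact not_not.mpr hi₀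
  have hl : (i₀ : ℕ) ≠ n - 1 := by omega
  constructor <;> ext k
  · simp only [cmvL, of_apply, if_pos hi₀, if_neg hl, Pi.add_apply, Pi.single_apply, Fin.ext_iff]
    split_ifs <;> first | omega | simp
  · simp only [cmvL, of_apply, if_neg hodd]
    simp only [Pi.add_apply, Pi.single_apply, Fin.ext_iff, hi₁, Nat.add_sub_cancel]
    split_ifs <;> first | omega | simp

lemma cmvM_row_of_eq_zero {i : Fin n} (hi : (i : ℕ) = 0) : cmvM n α β i = Pi.single i 1 := by
  ext k
  simp only [cmvM, of_apply, if_pos hi, Pi.single_apply]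

lemma cmvM_row_of_eq_last {i : Fin n} (hi : Odd (i : ℕ)) (hl : (i : ℕ) = n - 1) :
    cmvM n α β i = Pi.single i (starRingEnd ℂ β) := by
  have h0 : (i : ℕ) ≠ 0 := by rintro h; simp [h] at hi
  ext k
  simp only [cmvM, of_apply, if_neg h0, if_pos hi, if_pos hl, Pi.single_apply]

lemma isThetaRows_cmvM {i₀ i₁ : Fin n} (hi₀ : Odd (i₀ : ℕ)) (hi₁ : (i₁ : ℕ) = i₀ + 1) :
    IsThetaRows (cmvM n α β) i₀ i₁ (α i₀) := by
  have heven : ¬ Odd (i₁ : ℕ) := by rw [hi₁, Nat.odd_add_one]; exact not_not.mpr hi₀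
  have h0 : (i₀ : ℕ) ≠ 0 := by rintro h; simp [h] at hi₀
  have h0' : (i₁ : ℕ) ≠ 0 := by omega
  have hl : (i₀ : ℕ) ≠ n - 1 := by omega
  constructor <;> ext k
  · simp only [cmvM, of_apply, if_neg h0, if_pos hi₀, if_neg hl, Pi.add_apply, Pi.single_apply,
      Fin.ext_iff]
    split_ifs <;> first | omega | simp
  · simp only [cmvM, of_apply, if_neg h0', if_neg heven]
    simp only [Pi.add_apply, Pi.single_apply, Fin.ext_iff, hi₁, Nat.add_sub_cancel]
    split_ifs <;> first | omega | simp

lemma cmvL_mul_conjTranspose (hα : ∀ j, j < n - 1 → ‖α j‖ < 1) (hβ : ‖β‖ = 1) :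
    cmvL n α β * (cmvL n α β)ᴴ = 1 := by
  refine mul_conjTranspose_eq_one_of_blocks (fun i : Fin n => (i : ℕ) / 2) fun i => ?_
  rcases Nat.even_or_odd (i : ℕ) with hi | hi
  · by_cases hl : (i : ℕ) = n - 1
    · refine Or.inl ⟨_, by rw [Complex.norm_conj, hβ], cmvL_row_of_eq_last hi hl, fun j hj => ?_⟩
      obtain ⟨r, hr⟩ := hi
      exact Fin.ext (by omega)
    · obtain ⟨r, hr⟩ := hi
      refine Or.inr ⟨i, ⟨i + 1, by omega⟩, α i, hα i (by omega), Fin.ne_of_val_ne (by simp),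
        isThetaRows_cmvL ⟨r, hr⟩ rfl, Or.inl rfl, fun j => ?_⟩
      simp only [Fin.ext_iff]
      omega
  · obtain ⟨r, hr⟩ := hi
    refine Or.inr ⟨⟨i - 1, by omega⟩, i, α (i - 1), hα _ (by omega),
      Fin.ne_of_val_ne (by simp; omega), isThetaRows_cmvL ⟨r, by simp; omega⟩ (by simp; omega),
      Or.inr rfl, fun j => ?_⟩
    simp only [Fin.ext_iff]
    omega

lemma cmvM_mul_conjTranspose (hα : ∀ j, j < n - 1 → ‖α j‖ < 1) (hβ : ‖β‖ = 1) :
    cmvM n α β * (cmvM n α β)ᴴ = 1 := by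
  refine mul_conjTranspose_eq_one_of_blocks (fun i : Fin n => ((i : ℕ) + 1) / 2) fun i => ?_
  by_cases h0 : (i : ℕ) = 0
  · refine Or.inl ⟨1, norm_one, cmvM_row_of_eq_zero h0, fun j hj => Fin.ext ?_⟩
    omega
  rcases Nat.even_or_odd (i : ℕ) with hi | hi
  · obtain ⟨r, hr⟩ := hi
    refine Or.inr ⟨⟨i - 1, by omega⟩, i, α (i - 1), hα _ (by omega),
      Fin.ne_of_val_ne (by simp; omega), isThetaRows_cmvM ⟨r - 1, by simp; omega⟩ (by simp; omega),
      Or.inr rfl, fun j => ?_⟩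
    simp only [Fin.ext_iff]
    omega
  · by_cases hl : (i : ℕ) = n - 1
    · refine Or.inl ⟨_, by rw [Complex.norm_conj, hβ], cmvM_row_of_eq_last hi hl, fun j hj => ?_⟩
      obtain ⟨r, hr⟩ := hi
      exact Fin.ext (by omega)
    · obtain ⟨r, hr⟩ := hi
      refine Or.inr ⟨i, ⟨i + 1, by omega⟩, α i, hα i (by omega), Fin.ne_of_val_ne (by simp),
        isThetaRows_cmvM ⟨r, hr⟩ rfl, Or.inl rfl, fun j => ?_⟩
      simp only [Fin.ext_iff]
      omega

lemma cmv_mem_unitary (hα : ∀ j, j < n - 1 → ‖α j‖ < 1) (hβ : ‖β‖ = 1) :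
    CMVmat n α β ∈ unitary (Matrix (Fin n) (Fin n) ℂ) :=
  mul_mem (mem_unitaryGroup_iff.mpr (cmvL_mul_conjTranspose hα hβ))
    (mem_unitaryGroup_iff.mpr (cmvM_mul_conjTranspose hα hβ))

lemma cmv_eigenvector_eq_zero (hα : ∀ j, j < n - 1 → ‖α j‖ < 1) {μ : ℂ} (hμ : μ ≠ 0)
    {v : Fin n → ℂ} (hv : CMVmat n α β *ᵥ v = μ • v) (hn : 0 < n) (hv₀ : v ⟨0, hn⟩ = 0) :
    v = 0 := by
  set u := cmvM n α β *ᵥ v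
  have hLu : cmvL n α β *ᵥ u = μ • v := by rw [mulVec_mulVec]; exact hv
  have key : ∀ m : ℕ, ∀ i : Fin n, (i : ℕ) ≤ m → v i = 0 ∧ u i = 0 := by
    intro m
    induction m with
    | zero =>
      intro i hi
      obtain rfl : i = ⟨0, hn⟩ := Fin.ext (Nat.le_zero.mp hi)
      refine ⟨hv₀, ?_⟩
      change cmvM n α β _ ⬝ᵥ v = 0
      rw [cmvM_row_of_eq_zero rfl, single_dotProduct, one_mul, hv₀]
    | succ m ih =>
      intro i₁ hi₁
      rcases Nat.lt_or_ge (i₁ : ℕ) (m + 1) with h | h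
      · exact ih i₁ (by omega)
      obtain ⟨i₀, rfl⟩ : ∃ i₀ : Fin n, (i₀ : ℕ) = m := ⟨⟨m, by omega⟩, rfl⟩
      obtain ⟨hvm, hum⟩ := ih i₀ le_rfl
      have ha := hα i₀ (by omega)
      rcases Nat.even_or_odd (i₀ : ℕ) with hm | hm
      · have hLum : (cmvL n α β *ᵥ u) i₀ = 0 := by rw [hLu, Pi.smul_apply, hvm, smul_zero]
        obtain ⟨hu₁, hLu₁⟩ :=
          (isThetaRows_cmvL (i₁ := i₁) hm (by omega)).mulVec_apply_eq_zero ha hum hLum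
        rw [hLu, Pi.smul_apply, smul_eq_mul] at hLu₁
        exact ⟨(mul_eq_zero.mp hLu₁).resolve_left hμ, hu₁⟩
      · exact (isThetaRows_cmvM (i₁ := i₁) hm (by omega)).mulVec_apply_eq_zero ha hvm hum
  funext i
  exact (key i i le_rfl).1

lemma finrank_eigenspace_cmv_le_one (hα : ∀ j, j < n - 1 → ‖α j‖ < 1) {μ : ℂ} (hμ : μ ≠ 0) :
    Module.finrank ℂ (Module.End.eigenspace (toLin' (CMVmat n α β)) μ) ≤ 1 := by
  rcases n.eq_zero_or_pos with rfl | hn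
  · exact (Submodule.finrank_le _).trans (by simp)
  let head := (LinearMap.proj (⟨0, hn⟩ : Fin n) : (Fin n → ℂ) →ₗ[ℂ] ℂ).comp
    (Module.End.eigenspace (toLin' (CMVmat n α β)) μ).subtype
  have hinj : Function.Injective head := by
    rw [← LinearMap.ker_eq_bot, eq_bot_iff]
    intro x hx
    have hv := Module.End.mem_eigenspace_iff.mp x.2
    rw [toLin'_apply] at hv
    exact Subtype.ext (cmv_eigenvector_eq_zero hα hμ hv hn hx)
  exact (LinearMap.finrank_le_finrank_of_injective hinj).trans (Module.finrank_self ℂ).le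

end CMV

theorem simple_spectrum_on_circle_general (n : ℕ)
    (α : ℕ → ℂ) (hα : ∀ j, j < n - 1 → ‖α j‖ < 1)
    (β : ℂ) (hβ : ‖β‖ = 1) :
    ∃ ζ : Fin n → ℂ, Function.Injective ζ ∧ (∀ j, ‖ζ j‖ = 1) ∧
      Matrix.charpoly (CMVmat n α β) = ∏ j, (Polynomial.X - Polynomial.C (ζ j)) := by
  have hU := cmv_mem_unitary hα hβ
  have : IsStarNormal (CMVmat n α β) := isStarNormal_of_mem_unitary hU
  have hsimple : ∀ r, (CMVmat n α β).charpoly.rootMultiplicity r ≤ 1 := by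
    intro r
    by_cases hr : (CMVmat n α β).charpoly.IsRoot r
    · rw [rootMultiplicity_charpoly_eq_finrank_eigenspace]
      refine finrank_eigenspace_cmv_le_one hα fun h0 => ?_
      simpa [h0] using norm_eq_one_of_isRoot_charpoly hU hr
    · rw [rootMultiplicity_eq_zero hr]
      exact zero_le_one
  obtain ⟨ζ, hinj, hroot, hprod⟩ := exists_injective_eq_prod_X_sub_C (charpoly_monic _)
    (by rw [charpoly_natDegree_eq_dim, Fintype.card_fin]) hsimple
  exact ⟨ζ, hinj, fun j => norm_eq_one_of_isRoot_charpoly hU (hroot j), hprod⟩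

/-- a finite CMV matrix has simple spectrum on the unit circle:
`det (zI − C) = ∏ (z − ζ_j)` with `ζ_j ∈ 𝕋` pairwise distinct. -/
theorem simple_spectrum_on_circle (n : ℕ) (hn : 2 ≤ n)
    (α : ℕ → ℂ) (hα : ∀ j, j < n - 1 → ‖α j‖ < 1)
    (β : ℂ) (hβ : ‖β‖ = 1) :
    ∃ ζ : Fin n → ℂ, Function.Injective ζ ∧ (∀ j, ‖ζ j‖ = 1) ∧
      Matrix.charpoly (CMVmat n α β) = ∏ j, (Polynomial.X - Polynomial.C (ζ j)) :=
  simple_spectrum_on_circle_general n α hα β hβ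

end CMVPaper
end
end

section
/- Let C = C(α₀,…,α_{n-2};β) be a finite CMV matrix of order n with distinct eigenvalues ζ₁,…,ζ_n, let Φ_{n-1}(z) = det(zI − C^{(n-1)}) be the characteristic polynomial of the leading principal (n−1)×(n−1) submatrix of C, and Φ̃_n(z) = det(zI − C). Then the Weyl function satisfies w(z) = ⟨(zI−C)^{-1}e_n, e_n⟩ = Φ_{n-1}(z)/Φ̃_n(z); moreover Φ_{n-1}(ζ_j) ≠ 0 for every j, the masses of the n-th spectral measure of C are μ_j = Φ_{n-1}(ζ_j)/Φ̃_n'(ζ_j), each μ_j is a strictly positive real number, and Σ_{j=1}^n μ_j = 1. -/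
/-!
Cramer's rule gives `w = Φ_{n-1} / Φ̃_n` at once. If `U` is the unitary matrix whose columns are
the eigenvectors `h_j`, then `zI - C = U · diag(z - ζ_j) · U*`, hence
`adj(zI - C) = U · diag(∏_{k ≠ j} (z - ζ_k)) · U*` for every `z`. Its `(n, n)` entry is
`Φ_{n-1}(z) = ∑_j μ_j ∏_{k ≠ j} (z - ζ_k)`, which at `z = ζ_j` is `μ_j Φ̃_n'(ζ_j)`, and the
`(n, n)` entry of `U U* = 1` is `∑_j μ_j = 1`.

The CMV structure enters only through `μ_j > 0`, i.e. no eigenvector of `C = LM` vanishes at the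
last coordinate. The `2 × 2` blocks `Θ(α)` of `L` and of `M` are invertible and alternate, so a zero
in the last coordinates of `v` and `Mv` propagates up to the first one.
-/

open Complex Polynomial Matrix BigOperators Finset

noncomputable section

namespace CMVPaper

section Resolvent

variable {m : ℕ}

lemma innerC_single (u : Fin m → ℂ) (i : Fin m) : innerC u (Pi.single i 1) = u i := by
  simp [innerC, Pi.single_apply]

lemma lastVec_eq_single : lastVec (m + 1) = Pi.single (Fin.last m) 1 := by
  ext i
  simp [lastVec, Pi.single_apply, Fin.ext_iff]

lemma innerC_lastVec (u : Fin (m + 1) → ℂ) : innerC u (lastVec (m + 1)) = u (Fin.last m) := by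
  rw [lastVec_eq_single, innerC_single]

lemma weylFn_eq_inv_apply (M : Matrix (Fin (m + 1)) (Fin (m + 1)) ℂ) (z : ℂ) :
    weylFn M z = (z • 1 - M)⁻¹ (Fin.last m) (Fin.last m) := by
  rw [weylFn, innerC_lastVec, lastVec_eq_single, mulVec_single_one]
  rfl

lemma det_smul_one_sub (M : Matrix (Fin m) (Fin m) ℂ) (z : ℂ) :
    (z • 1 - M).det = M.charpoly.eval z := by
  rw [eval_charpoly, smul_one_eq_diagonal]
  rfl

lemma adjugate_smul_one_sub_apply_last (M : Matrix (Fin (m + 1)) (Fin (m + 1)) ℂ) (z : ℂ) :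
    (z • 1 - M).adjugate (Fin.last m) (Fin.last m) = (leadPrincipal M m).charpoly.eval z := by
  have hminor : (z • 1 - M).submatrix Fin.castSucc Fin.castSucc = z • 1 - leadPrincipal M m := by
    ext i j
    simp [leadPrincipal, Matrix.one_apply, Fin.castSucc, Fin.castAdd, Fin.castLE, Fin.val_inj]
  rw [adjugate_fin_succ_eq_det_submatrix, Fin.succAbove_last, hminor, det_smul_one_sub]
  simp

/-- On the spectrum both sides are junk `0`s: the inverse of a singular matrix is `0`. -/
theorem weylFn_eq_div (M : Matrix (Fin (m + 1)) (Fin (m + 1)) ℂ) (z : ℂ) :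
    weylFn M z = (leadPrincipal M m).charpoly.eval z / M.charpoly.eval z := by
  rw [weylFn_eq_inv_apply, Matrix.inv_def, Matrix.smul_apply, adjugate_smul_one_sub_apply_last,
    det_smul_one_sub, Ring.inverse_eq_inv', smul_eq_mul, div_eq_inv_mul]

end Resolvent

theorem _root_.Matrix.adjugate_mul_mul_of_mul_eq_one {ι R : Type*} [Fintype ι] [DecidableEq ι]
    [CommRing R] {A B : Matrix ι ι R} (hAB : A * B = 1) (hBA : B * A = 1) (X : Matrix ι ι R) :
    adjugate (A * X * B) = A * adjugate X * B := by
  have adj_eq {P Q : Matrix ι ι R} (hPQ : P * Q = 1) : adjugate P = P.det • Q := by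
    rw [← Matrix.mul_one (adjugate P), ← hPQ, ← Matrix.mul_assoc, adjugate_mul, smul_one_mul]
  have hdet : A.det * B.det = 1 := by rw [← det_mul, hAB, det_one]
  rw [adjugate_mul_distrib, adjugate_mul_distrib, adj_eq hAB, adj_eq hBA]
  simp only [Matrix.smul_mul, Matrix.mul_smul, smul_smul, hdet, one_smul, Matrix.mul_assoc]

section Eigenbasis

variable {n : ℕ} {h : Fin n → Fin n → ℂ}

lemma conjTranspose_mul_self_of_orthonormal
    (horth : ∀ j k, innerC (h j) (h k) = if j = k then 1 else 0) :
    ((of h)ᵀ)ᴴ * (of h)ᵀ = 1 := by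
  ext j k
  simpa [innerC, mul_apply, one_apply, mul_comm, eq_comm] using horth k j

lemma mul_conjTranspose_self_of_orthonormal
    (horth : ∀ j k, innerC (h j) (h k) = if j = k then 1 else 0) :
    (of h)ᵀ * ((of h)ᵀ)ᴴ = 1 :=
  mul_eq_one_comm.mp (conjTranspose_mul_self_of_orthonormal horth)

lemma sum_norm_sq_eq_one_of_orthonormal
    (horth : ∀ j k, innerC (h j) (h k) = if j = k then 1 else 0) (i : Fin n) :
    ∑ j, ‖h j i‖ ^ 2 = 1 := by
  have := congrFun (congrFun (mul_conjTranspose_self_of_orthonormal horth) i) i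
  simp only [mul_apply, one_apply_eq, transpose_apply, conjTranspose_apply, of_apply,
    Complex.star_def, Complex.mul_conj, ← Complex.sq_norm] at this
  exact_mod_cast this

lemma smul_one_sub_eq_of_orthonormal_eigenbasis {M : Matrix (Fin n) (Fin n) ℂ} {ζ : Fin n → ℂ}
    (heig : ∀ j, M *ᵥ h j = ζ j • h j)
    (horth : ∀ j k, innerC (h j) (h k) = if j = k then 1 else 0) (z : ℂ) :
    z • 1 - M = (of h)ᵀ * diagonal (fun j => z - ζ j) * ((of h)ᵀ)ᴴ := by
  have hMU : M * (of h)ᵀ = (of h)ᵀ * diagonal ζ := by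
    ext i j
    have := congrFun (heig j) i
    simp only [mulVec, dotProduct, Pi.smul_apply, smul_eq_mul] at this
    rw [mul_diagonal, mul_apply]
    simp only [transpose_apply, of_apply]
    rw [this, mul_comm]
  have hdiag : diagonal (fun j => z - ζ j) = z • 1 - diagonal ζ := by
    ext i j
    by_cases hij : i = j <;> simp [hij, diagonal_apply_ne, smul_one_eq_diagonal]
  rw [hdiag, Matrix.mul_sub, Matrix.sub_mul, ← hMU, Matrix.mul_smul, Matrix.mul_one,
    Matrix.smul_mul, mul_conjTranspose_self_of_orthonormal horth, Matrix.mul_assoc,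
    mul_conjTranspose_self_of_orthonormal horth, Matrix.mul_one]

theorem adjugate_smul_one_sub_apply_self_of_orthonormal_eigenbasis
    {M : Matrix (Fin n) (Fin n) ℂ} {ζ : Fin n → ℂ} (heig : ∀ j, M *ᵥ h j = ζ j • h j)
    (horth : ∀ j k, innerC (h j) (h k) = if j = k then 1 else 0) (z : ℂ) (i : Fin n) :
    (z • 1 - M).adjugate i i = ∑ j, ((‖h j i‖ ^ 2 : ℝ) : ℂ) * ∏ k ∈ univ.erase j, (z - ζ k) := by
  rw [smul_one_sub_eq_of_orthonormal_eigenbasis heig horth,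
    Matrix.adjugate_mul_mul_of_mul_eq_one (mul_conjTranspose_self_of_orthonormal horth)
      (conjTranspose_mul_self_of_orthonormal horth), adjugate_diagonal, mul_apply]
  simp only [mul_diagonal, transpose_apply, conjTranspose_apply, of_apply]
  refine Finset.sum_congr rfl fun j _ => ?_
  rw [Complex.ofReal_pow, ← Complex.mul_conj', Complex.star_def]
  ring

end Eigenbasis

lemma rhoC_pos {a : ℂ} (ha : ‖a‖ < 1) : 0 < rhoC a :=
  Real.sqrt_pos.2 (by nlinarith [norm_nonneg a])

lemma rhoC_sq_add_conj_mul_self {a : ℂ} (ha : ‖a‖ < 1) :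
    ((rhoC a : ℝ) : ℂ) ^ 2 + starRingEnd ℂ a * a = 1 := by
  have hsq : rhoC a ^ 2 = 1 - ‖a‖ ^ 2 := Real.sq_sqrt (by nlinarith [norm_nonneg a])
  rw [← Complex.ofReal_pow, hsq, mul_comm, Complex.mul_conj, ← Complex.sq_norm]
  push_cast
  ring

/-- Rows `i` and `j` of `N` read only the coordinates `i` and `j`, on which they act as `Θ(a)`. -/
def IsThetaBlock {n : ℕ} (N : Matrix (Fin n) (Fin n) ℂ) (a : ℂ) (i j : Fin n) : Prop :=
  ∀ x : Fin n → ℂ, (N *ᵥ x) i = starRingEnd ℂ a * x i + rhoC a * x j ∧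
    (N *ᵥ x) j = rhoC a * x i - a * x j

namespace IsThetaBlock

variable {n : ℕ} {N : Matrix (Fin n) (Fin n) ℂ} {a : ℂ} {i j : Fin n}

/-- `Θ(a)` is unitary, so it is inverted by its adjoint `[[a, ρ], [ρ, -conj a]]`. -/
lemma apply_eq (hN : IsThetaBlock N a i j) (ha : ‖a‖ < 1) (x : Fin n → ℂ) :
    x i = a * (N *ᵥ x) i + rhoC a * (N *ᵥ x) j ∧
      x j = rhoC a * (N *ᵥ x) i - starRingEnd ℂ a * (N *ᵥ x) j := by
  obtain ⟨hi, hj⟩ := hN x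
  have hρ := rhoC_sq_add_conj_mul_self ha
  rw [hi, hj]
  exact ⟨by linear_combination (-x i) * hρ, by linear_combination (-x j) * hρ⟩

lemma eq_zero_of_mulVec_eq_zero (hN : IsThetaBlock N a i j) (ha : ‖a‖ < 1) {x : Fin n → ℂ}
    (hxi : (N *ᵥ x) i = 0) (hxj : (N *ᵥ x) j = 0) : x i = 0 ∧ x j = 0 := by
  simpa [hxi, hxj] using hN.apply_eq ha x

lemma fst_eq_zero_of_snd_eq_zero (hN : IsThetaBlock N a i j) (ha : ‖a‖ < 1) {x : Fin n → ℂ}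
    (hxj : x j = 0) (hNxj : (N *ᵥ x) j = 0) : x i = 0 ∧ (N *ᵥ x) i = 0 := by
  obtain ⟨hi, hj⟩ := hN.apply_eq ha x
  rw [hxj, hNxj, mul_zero, sub_zero, zero_eq_mul] at hj
  have hNxi := hj.resolve_left (by exact_mod_cast (rhoC_pos ha).ne')
  rw [hNxj, hNxi, mul_zero, mul_zero, add_zero] at hi
  exact ⟨hi, hNxi⟩

end IsThetaBlock

section Factors

variable {m : ℕ} (α : ℕ → ℂ) (β : ℂ)

lemma cmvL_isThetaBlock (i : Fin m) (hi : Even (i : ℕ)) :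
    IsThetaBlock (cmvL (m + 1) α β) (α i) i.castSucc i.succ := by
  have hi' : ¬ Even ((i : ℕ) + 1) := Nat.not_even_iff_odd.2 hi.add_one
  intro x
  simp only [mulVec, dotProduct]
  constructor <;>
  · rw [Fintype.sum_eq_add i.castSucc i.succ Fin.castSucc_lt_succ.ne]
    · simp [cmvL, hi, hi', i.isLt.ne, Fin.ext_iff, sub_eq_add_neg]
    · rintro k ⟨hk1, hk2⟩
      simp only [Ne, Fin.ext_iff, Fin.val_castSucc, Fin.val_succ] at hk1 hk2
      simp [cmvL, Fin.ext_iff, hk1, hk2, hi, hi', i.isLt.ne]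

lemma cmvM_isThetaBlock (i : Fin m) (hi : Odd (i : ℕ)) :
    IsThetaBlock (cmvM (m + 1) α β) (α i) i.castSucc i.succ := by
  have hi' : ¬ Odd ((i : ℕ) + 1) := Nat.not_odd_iff_even.2 hi.add_one
  have hi0 : (i : ℕ) ≠ 0 := by rintro h; simp [h] at hi
  intro x
  simp only [mulVec, dotProduct]
  constructor <;>
  · rw [Fintype.sum_eq_add i.castSucc i.succ Fin.castSucc_lt_succ.ne]
    · simp [cmvM, hi, hi', hi0, i.isLt.ne, Fin.ext_iff, -Fin.val_eq_zero_iff, sub_eq_add_neg]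
    · rintro k ⟨hk1, hk2⟩
      simp only [Ne, Fin.ext_iff, Fin.val_castSucc, Fin.val_succ] at hk1 hk2
      simp [cmvM, Fin.ext_iff, -Fin.val_eq_zero_iff, hk1, hk2, hi, hi', hi0, i.isLt.ne]

lemma cmvL_mulVec_last (hm : Even m) (x : Fin (m + 1) → ℂ) :
    (cmvL (m + 1) α β *ᵥ x) (Fin.last m) = starRingEnd ℂ β * x (Fin.last m) := by
  rw [mulVec, dotProduct, Fintype.sum_eq_single (Fin.last m)]
  · simp [cmvL, hm]
  · intro k hk
    simp [cmvL, hm, hk]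

lemma cmvM_mulVec_last (hm : Odd m) (x : Fin (m + 1) → ℂ) :
    (cmvM (m + 1) α β *ᵥ x) (Fin.last m) = starRingEnd ℂ β * x (Fin.last m) := by
  have hm0 : m ≠ 0 := by rintro rfl; simp at hm
  rw [mulVec, dotProduct, Fintype.sum_eq_single (Fin.last m)]
  · simp [cmvM, hm, hm0]
  · intro k hk
    simp [cmvM, hm, hm0, hk]

lemma cmvM_mulVec_zero (x : Fin (m + 1) → ℂ) : (cmvM (m + 1) α β *ᵥ x) 0 = x 0 := by
  rw [mulVec, dotProduct, Fintype.sum_eq_single 0]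
  · simp [cmvM]
  · intro k hk
    simp [cmvM, hk]

end Factors

section CMV

variable {m : ℕ} {α : ℕ → ℂ} {β : ℂ}

lemma eq_zero_of_cmvL_mulVec_eq_zero (hα : ∀ j < m, ‖α j‖ < 1) (hβ : β ≠ 0)
    {x : Fin (m + 1) → ℂ} (hx : cmvL (m + 1) α β *ᵥ x = 0) : x = 0 := by
  have block (i : Fin m) (hi : Even (i : ℕ)) :=
    (cmvL_isThetaBlock α β i hi).eq_zero_of_mulVec_eq_zero (hα i i.isLt)
      (congrFun hx _) (congrFun hx _)
  funext k
  rcases Nat.even_or_odd k with hk | hk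
  · rcases Fin.eq_castSucc_or_eq_last k with ⟨i, rfl⟩ | rfl
    · exact (block i hk).1
    · simpa [hx, hβ] using (cmvL_mulVec_last α β hk x).symm
  · rcases Fin.eq_zero_or_eq_succ k with rfl | ⟨i, rfl⟩
    · simp at hk
    · exact (block i (by simpa [Nat.odd_add_one] using hk)).2

lemma eq_zero_of_cmvM_mulVec_eq_zero (hα : ∀ j < m, ‖α j‖ < 1) (hβ : β ≠ 0)
    {x : Fin (m + 1) → ℂ} (hx : cmvM (m + 1) α β *ᵥ x = 0) : x = 0 := by
  have block (i : Fin m) (hi : Odd (i : ℕ)) :=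
    (cmvM_isThetaBlock α β i hi).eq_zero_of_mulVec_eq_zero (hα i i.isLt)
      (congrFun hx _) (congrFun hx _)
  funext k
  rcases Nat.even_or_odd k with hk | hk
  · rcases Fin.eq_zero_or_eq_succ k with rfl | ⟨i, rfl⟩
    · simpa [hx, eq_comm] using cmvM_mulVec_zero α β x
    · exact (block i (by simpa [Nat.even_add_one] using hk)).2
  · rcases Fin.eq_castSucc_or_eq_last k with ⟨i, rfl⟩ | rfl
    · exact (block i hk).1
    · simpa [hx, hβ] using (cmvM_mulVec_last α β hk x).symm

lemma eq_zero_of_CMVmat_mulVec_eq_zero (hα : ∀ j < m, ‖α j‖ < 1) (hβ : β ≠ 0)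
    {x : Fin (m + 1) → ℂ} (hx : CMVmat (m + 1) α β *ᵥ x = 0) : x = 0 := by
  rw [CMVmat, ← mulVec_mulVec] at hx
  exact eq_zero_of_cmvM_mulVec_eq_zero hα hβ (eq_zero_of_cmvL_mulVec_eq_zero hα hβ hx)

/-- With `w = M v`, the eigenvalue equation reads `L w = ζ v`; the blocks of `L` and `M`
alternate, so the vanishing of `v` and `w` at index `k + 1` forces it at index `k`. -/
theorem eq_zero_of_CMVmat_mulVec_eq_smul_of_last_eq_zero (hα : ∀ j < m, ‖α j‖ < 1)
    (hβ : β ≠ 0) {ζ : ℂ} {v : Fin (m + 1) → ℂ} (hv : CMVmat (m + 1) α β *ᵥ v = ζ • v)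
    (hlast : v (Fin.last m) = 0) : v = 0 := by
  rcases eq_or_ne ζ 0 with rfl | hζ
  · exact eq_zero_of_CMVmat_mulVec_eq_zero hα hβ (by rwa [zero_smul] at hv)
  set w := cmvM (m + 1) α β *ᵥ v with hw
  have hLw : cmvL (m + 1) α β *ᵥ w = ζ • v := by rw [hw, mulVec_mulVec, ← CMVmat, hv]
  have hvw : ∀ k, v k = 0 ∧ w k = 0 := by
    refine Fin.reverseInduction ⟨hlast, ?_⟩ fun i ⟨hv1, hw1⟩ => ?_
    · rcases Nat.even_or_odd m with hm | hm
      · simpa [hLw, hlast, hβ] using (cmvL_mulVec_last α β hm w).symm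
      · simp [hw, cmvM_mulVec_last α β hm, hlast]
    · rcases Nat.even_or_odd (i : ℕ) with hi | hi
      · obtain ⟨hwi, hLwi⟩ := (cmvL_isThetaBlock α β i hi).fst_eq_zero_of_snd_eq_zero (hα i i.isLt)
          hw1 (by simp [hLw, hv1])
        simp only [hLw, Pi.smul_apply, smul_eq_mul, mul_eq_zero, hζ, false_or] at hLwi
        exact ⟨hLwi, hwi⟩
      · exact (cmvM_isThetaBlock α β i hi).fst_eq_zero_of_snd_eq_zero (hα i i.isLt) hv1 hw1
  exact funext fun k => (hvw k).1

end CMV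

lemma sum_mul_prod_erase_sub_self {ι : Type*} [Fintype ι] [DecidableEq ι] (ζ : ι → ℂ)
    (c : ι → ℂ) (j : ι) :
    ∑ i, c i * ∏ k ∈ univ.erase i, (ζ j - ζ k) = c j * ∏ k ∈ univ.erase j, (ζ j - ζ k) := by
  refine Fintype.sum_eq_single j fun i hij => ?_
  rw [prod_eq_zero (mem_erase.2 ⟨Ne.symm hij, mem_univ j⟩) (sub_self _), mul_zero]

lemma eval_derivative_prod_X_sub_C {ι : Type*} [Fintype ι] [DecidableEq ι] (ζ : ι → ℂ)
    (j : ι) : (derivative (∏ k, (X - C (ζ k)))).eval (ζ j) = ∏ k ∈ univ.erase j, (ζ j - ζ k) := by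
  rw [show ∏ k, (X - C (ζ k)) = Lagrange.nodal univ ζ from rfl,
    Lagrange.eval_nodal_derivative_eval_node_eq (mem_univ j), Lagrange.eval_nodal]

/-- the Weyl function of a finite CMV matrix equals `Φ_{n-1}/Φ̃_n`;
`Φ_{n-1}(ζ_j) ≠ 0` at every eigenvalue; the masses `μ_j = |⟨h_j, e_n⟩|²` of the `n`-th spectral
measure satisfy `μ_j = Φ_{n-1}(ζ_j)/Φ̃_n'(ζ_j) > 0` and `∑ μ_j = 1`. -/
theorem weyl_function_and_masses (n : ℕ) (hn : 2 ≤ n)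
    (α : ℕ → ℂ) (hα : ∀ j, j < n - 1 → ‖α j‖ < 1)
    (β : ℂ) (hβ : ‖β‖ = 1)
    (ζ : Fin n → ℂ) (hζinj : Function.Injective ζ)
    (hζ : Matrix.charpoly (CMVmat n α β) = ∏ j, (Polynomial.X - Polynomial.C (ζ j)))
    (h : Fin n → (Fin n → ℂ))
    (heig : ∀ j, (CMVmat n α β) *ᵥ (h j) = ζ j • h j)
    (horth : ∀ j k, innerC (h j) (h k) = if j = k then 1 else 0) :
    (∀ z : ℂ, (∀ j, z ≠ ζ j) →
      weylFn (CMVmat n α β) z =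
        (PhiPoly n α β (n - 1)).eval z / (Matrix.charpoly (CMVmat n α β)).eval z) ∧
    (∀ j, (PhiPoly n α β (n - 1)).eval (ζ j) ≠ 0) ∧
    (∀ j, 0 < ‖innerC (h j) (lastVec n)‖ ^ 2 ∧
      ((‖innerC (h j) (lastVec n)‖ ^ 2 : ℝ) : ℂ) =
        (PhiPoly n α β (n - 1)).eval (ζ j) /
          (Polynomial.derivative (Matrix.charpoly (CMVmat n α β))).eval (ζ j)) ∧
    ∑ j, ‖innerC (h j) (lastVec n)‖ ^ 2 = 1 := by
  obtain ⟨m, rfl⟩ : ∃ m, n = m + 1 := ⟨n - 1, by omega⟩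
  simp only [Nat.add_sub_cancel, innerC_lastVec] at hα ⊢
  have hβ0 : β ≠ 0 := by rintro rfl; simp at hβ
  have hμ_pos (j : Fin (m + 1)) : 0 < ‖h j (Fin.last m)‖ ^ 2 := by
    have hne : h j ≠ 0 := fun h0 => by simpa [h0, innerC] using horth j j
    exact pow_pos (norm_pos_iff.2 fun hlast =>
      hne (eq_zero_of_CMVmat_mulVec_eq_smul_of_last_eq_zero hα hβ0 (heig j) hlast)) 2
  have hχ' (j : Fin (m + 1)) : (derivative (CMVmat (m + 1) α β).charpoly).eval (ζ j) =
      ∏ k ∈ univ.erase j, (ζ j - ζ k) := by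
    rw [hζ, eval_derivative_prod_X_sub_C]
  have hχ'_ne (j : Fin (m + 1)) : (derivative (CMVmat (m + 1) α β).charpoly).eval (ζ j) ≠ 0 := by
    rw [hχ']
    exact prod_ne_zero_iff.2 fun k hk => sub_ne_zero.2 (hζinj.ne (ne_of_mem_erase hk).symm)
  have hΦ (j : Fin (m + 1)) : (PhiPoly (m + 1) α β m).eval (ζ j) =
      ((‖h j (Fin.last m)‖ ^ 2 : ℝ) : ℂ) *
        (derivative (CMVmat (m + 1) α β).charpoly).eval (ζ j) := by
    rw [PhiPoly, ← adjugate_smul_one_sub_apply_last,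
      adjugate_smul_one_sub_apply_self_of_orthonormal_eigenbasis heig horth,
      sum_mul_prod_erase_sub_self, hχ']
  refine ⟨fun z _ => weylFn_eq_div _ z, fun j => ?_, fun j => ⟨hμ_pos j, ?_⟩,
    sum_norm_sq_eq_one_of_orthonormal horth _⟩
  · rw [hΦ]
    exact mul_ne_zero (ofReal_ne_zero.2 (hμ_pos j).ne') (hχ'_ne j)
  · rw [hΦ, mul_div_cancel_right₀ _ (hχ'_ne j)]

end CMVPaper
end
end

section
/- Let Z_l = {z_{j,l}}_{j=1}^m, l = 1,2, be two m-point sets on the unit circle 𝕋 with Z₁ ∩ Z₂ = ∅, labeled z_{j,l} = e^{ix_{j,l}} with 0 ≤ x_{1,l} < x_{2,l} < … < x_{m,l} < 2π. For k = 1,…,m define ω_k = (∏_{j=1}^m sin((x_{k,1}−x_{j,2})/2)) / (∏_{j=1, j≠k}^m sin((x_{k,1}−x_{j,1})/2)); each ω_k is a nonzero real number. Then Z₁ and Z₂ interlace if and only if all the numbers ω₁,…,ω_m have the same sign. -/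
/-!
For angles `a, b ∈ [0, 2π)` the number `sin ((a - b) / 2)` has the sign of `a - b`. Writing
`c k` for the number of points of `x₂` below `x₁ k`, the numerator of `ω k` therefore has
`m - c k` negative factors and its denominator `m - 1 - k`, so `ω k > 0` exactly when
`c k + k` is odd. Since `c` is monotone with values in `[0, m]`, the parity of `c k + k` is
constant exactly when `c k - k` is constantly `0` or constantly `1`, and these two cases are the
two interlacing patterns.
-/

open Complex Polynomial Matrix BigOperators Finset

noncomputable section

namespace CMVPaper

lemma prod_pos_iff_even_card_filter_neg {ι R : Type*} [CommRing R] [LinearOrder R]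
    [IsStrictOrderedRing R] {s : Finset ι} {f : ι → R} (hf : ∀ i ∈ s, f i ≠ 0) :
    0 < ∏ i ∈ s, f i ↔ Even #{i ∈ s | f i < 0} := by
  classical
  induction s using Finset.induction with
  | empty => simp
  | insert a s ha ih =>
    have ih := ih fun i hi => hf i (mem_insert_of_mem hi)
    rw [prod_insert ha, filter_insert]
    have hs : ∏ i ∈ s, f i ≠ 0 := prod_ne_zero_iff.2 fun i hi => hf i (mem_insert_of_mem hi)
    rcases (hf a (mem_insert_self a s)).lt_or_gt with hneg | hpos
    · rw [if_pos hneg, card_insert_of_notMem fun h => ha (mem_filter.1 h).1, Nat.even_add_one,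
        ← ih, mul_pos_iff, not_lt, hs.le_iff_lt]
      simp [hneg, hneg.not_gt]
    · rw [if_neg hpos.not_gt, ← ih, mul_pos_iff_of_pos_left hpos]

lemma div_pos_iff_of_ne_zero {K : Type*} [Field K] [LinearOrder K] [IsStrictOrderedRing K]
    {a b : K} (ha : a ≠ 0) (hb : b ≠ 0) : 0 < a / b ↔ (0 < a ↔ 0 < b) := by
  rcases ha.lt_or_gt with ha | ha <;> rcases hb.lt_or_gt with hb | hb <;>
    simp [div_pos_iff, ha, hb, ha.not_gt, hb.not_gt]

lemma lt_card_filter_lt_iff {α : Type*} [LinearOrder α] {m : ℕ} {x : Fin m → α} (hx : Monotone x)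
    (k : Fin m) (t : α) : (k : ℕ) < #{j | x j < t} ↔ x k < t := by
  constructor
  · intro h
    by_contra hk
    have hsub : ({j | x j < t} : Finset (Fin m)) ⊆ Iio k := fun j hj => by
      simp only [mem_filter, mem_univ, true_and] at hj
      exact mem_Iio.2 (lt_of_not_ge fun hkj => hk ((hx hkj).trans_lt hj))
    have := card_le_card hsub
    rw [Fin.card_Iio] at this
    omega
  · intro h
    have hsub : Iic k ⊆ ({j | x j < t} : Finset (Fin m)) := fun j hj => by
      simpa using (hx (mem_Iic.1 hj)).trans_lt h
    simpa using card_le_card hsub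

lemma forall_odd_add_or_forall_even_add_iff {m : ℕ} {c : Fin m → ℕ} (hc : Monotone c)
    (hle : ∀ k, c k ≤ m) :
    ((∀ k, Odd (c k + k)) ∨ (∀ k, Even (c k + k))) ↔ ((∀ k, c k = k + 1) ∨ (∀ k, c k = k)) := by
  refine ⟨fun h => ?_, ?_⟩
  · cases m with
    | zero => exact Or.inr fun k => k.elim0
    | succ n =>
    have hpar : ∀ j k, Even (c j + j) ↔ Even (c k + k) := by
      rcases h with h | h <;> intro j k
      · simp only [← Nat.not_odd_iff_even, h]
      · simp only [h]
    -- `c k - k` is monotone and takes values in `{0, 1}`, all of the same parity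
    set d : Fin (n + 1) → ℤ := fun k => c k - k with hd
    have hdmono : Monotone d := Fin.monotone_iff_le_succ.2 fun i => by
      have h₁ := hc (Fin.castSucc_le_succ i)
      have h₂ := hpar i.castSucc i.succ
      simp only [Fin.val_castSucc, Fin.val_succ, Nat.even_iff] at h₂
      simp only [hd, Fin.val_castSucc, Fin.val_succ]
      omega
    have hconst : ∀ k, d k = d 0 := fun k => by
      have h₀ := hdmono (Fin.zero_le k)
      have h₁ := hdmono (Fin.le_last k)
      have h₂ := hle (Fin.last n)
      have h₃ := hpar 0 k
      simp only [hd, Fin.val_zero, Fin.val_last, Nat.even_iff] at h₀ h₁ h₃ ⊢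
      omega
    have h₀ := hle 0
    have h₁ := hdmono (Fin.zero_le (Fin.last n))
    have h₂ := hle (Fin.last n)
    simp only [hd, Fin.val_zero, Fin.val_last] at hconst h₁
    by_cases hc₀ : c 0 = 0
    · exact Or.inr fun k => by have := hconst k; omega
    · exact Or.inl fun k => by have := hconst k; omega
  · rintro (h | h)
    · exact Or.inl fun k => by rw [h k]; exact ⟨k, by ring⟩
    · exact Or.inr fun k => by rw [h k]; exact ⟨k, rfl⟩

def Interlaces {α : Type*} [LT α] {m : ℕ} (x y : Fin m → α) : Prop :=
  ∀ j : Fin m, x j < y j ∧ ∀ h : (j : ℕ) + 1 < m, y j < x ⟨(j : ℕ) + 1, h⟩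

section Interlaces

variable {α : Type*} [LinearOrder α] {m : ℕ} {x y : Fin m → α}

lemma interlaces_iff_forall_card_eq (hy : Monotone y) (hxy : ∀ i j, x i ≠ y j) :
    Interlaces x y ↔ ∀ k, #{j | y j < x k} = k := by
  refine ⟨fun h k => le_antisymm ?_ ?_, fun h j => ⟨?_, fun hj => ?_⟩⟩
  · exact not_lt.1 fun hk => (h k).1.not_gt ((lt_card_filter_lt_iff hy k _).1 hk)
  · obtain ⟨i, hi⟩ | hk := em (∃ i : Fin m, (i : ℕ) + 1 = k)
    · have hik : (⟨(i : ℕ) + 1, hi ▸ k.isLt⟩ : Fin m) = k := Fin.ext hi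
      have := (lt_card_filter_lt_iff hy i _).2 (hik ▸ (h i).2 (hi ▸ k.isLt))
      omega
    · have : (k : ℕ) = 0 := by
        by_contra hk₀
        exact hk ⟨⟨k - 1, by omega⟩, by simp; omega⟩
      omega
  · refine lt_of_le_of_ne (not_lt.1 fun hj => ?_) (hxy j j)
    have := (lt_card_filter_lt_iff hy j _).2 hj
    have := h j
    omega
  · refine (lt_card_filter_lt_iff hy j _).1 ?_
    rw [h]
    exact Nat.lt_succ_self _

lemma interlaces_swap_iff_forall_card_eq (hy : Monotone y) (hxy : ∀ i j, x i ≠ y j) :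
    Interlaces y x ↔ ∀ k, #{j | y j < x k} = k + 1 := by
  refine ⟨fun h k => le_antisymm ?_ ?_, fun h j => ⟨?_, fun hj => ?_⟩⟩
  · by_cases hk : (k : ℕ) + 1 < m
    · refine not_lt.1 fun hk' => (h k).2 hk |>.not_gt ?_
      exact (lt_card_filter_lt_iff hy ⟨(k : ℕ) + 1, hk⟩ _).1 hk'
    · exact (card_le_univ _).trans (by simp; omega)
  · exact (lt_card_filter_lt_iff hy k _).2 (h k).1
  · exact (lt_card_filter_lt_iff hy j _).1 (by rw [h]; exact Nat.lt_succ_self _)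
  · refine lt_of_le_of_ne (not_lt.1 fun hj' => ?_) (hxy j _)
    have := (lt_card_filter_lt_iff hy ⟨(j : ℕ) + 1, hj⟩ _).2 hj'
    simp only [h] at this
    omega

end Interlaces

section Trigonometric

open Real

lemma sin_half_sub_pos_iff {a b : ℝ} (ha : a ∈ Set.Ico 0 (2 * π)) (hb : b ∈ Set.Ico 0 (2 * π)) :
    0 < Real.sin ((a - b) / 2) ↔ b < a := by
  obtain ⟨ha₀, ha₁⟩ := ha
  obtain ⟨hb₀, hb₁⟩ := hb
  refine ⟨fun h => ?_, fun h => sin_pos_of_pos_of_lt_pi (by linarith) (by linarith)⟩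
  by_contra! hab
  exact h.not_ge (sin_nonpos_of_nonpos_of_neg_pi_le (by linarith) (by linarith))

lemma sin_half_sub_neg_iff {a b : ℝ} (ha : a ∈ Set.Ico 0 (2 * π)) (hb : b ∈ Set.Ico 0 (2 * π)) :
    Real.sin ((a - b) / 2) < 0 ↔ a < b := by
  rw [← sin_half_sub_pos_iff hb ha, ← neg_pos, ← Real.sin_neg, ← neg_div, neg_sub]

lemma sin_half_sub_ne_zero {a b : ℝ} (ha : a ∈ Set.Ico 0 (2 * π)) (hb : b ∈ Set.Ico 0 (2 * π))
    (hab : a ≠ b) : Real.sin ((a - b) / 2) ≠ 0 := by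
  rcases hab.lt_or_gt with h | h
  · exact ((sin_half_sub_neg_iff ha hb).2 h).ne
  · exact ((sin_half_sub_pos_iff ha hb).2 h).ne'

lemma injOn_exp_I_mul : Set.InjOn (fun t : ℝ => Complex.exp (I * t)) (Set.Ico 0 (2 * π)) := by
  intro s hs t ht hst
  refine Circle.exp_injOn_Ico (by simp) hs ht (Subtype.ext ?_)
  simpa only [Circle.coe_exp, mul_comm _ I] using hst

lemma eq_of_range_exp_I_mul_eq {m : ℕ} {x y : Fin m → ℝ} (hx : ∀ j, x j ∈ Set.Ico 0 (2 * π))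
    (hy : ∀ j, y j ∈ Set.Ico 0 (2 * π)) (hxmono : StrictMono x) (hymono : StrictMono y)
    (h : Set.range (fun j => Complex.exp (I * x j)) = Set.range (fun j => Complex.exp (I * y j))) :
    x = y := by
  rw [← hxmono.range_inj hymono]
  rw [Set.range_comp' (fun t : ℝ => Complex.exp (I * t)) x,
    Set.range_comp' (fun t : ℝ => Complex.exp (I * t)) y] at h
  exact (injOn_exp_I_mul.image_eq_image_iff (Set.range_subset_iff.2 hx)
    (Set.range_subset_iff.2 hy)).1 h

lemma interlaceOnT_range_iff {m : ℕ} {x₁ x₂ : Fin m → ℝ} (hr₁ : ∀ j, x₁ j ∈ Set.Ico 0 (2 * π))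
    (hr₂ : ∀ j, x₂ j ∈ Set.Ico 0 (2 * π)) (hmono₁ : StrictMono x₁) (hmono₂ : StrictMono x₂) :
    InterlaceOnT m (Set.range fun j => Complex.exp (I * x₁ j))
        (Set.range fun j => Complex.exp (I * x₂ j)) ↔
      Interlaces x₁ x₂ ∨ Interlaces x₂ x₁ := by
  refine ⟨?_, fun h => ⟨x₁, x₂, hr₁, hr₂, hmono₁, hmono₂, rfl, rfl, h⟩⟩
  rintro ⟨y₁, y₂, hy₁, hy₂, hymono₁, hymono₂, h₁, h₂, h⟩
  obtain rfl := eq_of_range_exp_I_mul_eq hy₁ hr₁ hymono₁ hmono₁ h₁.symm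
  obtain rfl := eq_of_range_exp_I_mul_eq hy₂ hr₂ hymono₂ hmono₂ h₂.symm
  exact h

lemma prod_sin_half_sub_pos_iff {ι : Type*} {s : Finset ι} {x : ι → ℝ} {a : ℝ}
    (hx : ∀ j ∈ s, x j ∈ Set.Ico 0 (2 * π)) (ha : a ∈ Set.Ico 0 (2 * π))
    (hne : ∀ j ∈ s, a ≠ x j) :
    0 < ∏ j ∈ s, Real.sin ((a - x j) / 2) ↔ Even #{j ∈ s | a < x j} := by
  rw [prod_pos_iff_even_card_filter_neg fun j hj => sin_half_sub_ne_zero ha (hx j hj) (hne j hj),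
    filter_congr fun j hj => sin_half_sub_neg_iff ha (hx j hj)]

def sinWeight {m : ℕ} (x₁ x₂ : Fin m → ℝ) (k : Fin m) : ℝ :=
  (∏ j, Real.sin ((x₁ k - x₂ j) / 2)) / ∏ j ∈ univ.erase k, Real.sin ((x₁ k - x₁ j) / 2)

variable {m : ℕ} {x₁ x₂ : Fin m → ℝ}

lemma sinWeight_ne_zero (hr₁ : ∀ j, x₁ j ∈ Set.Ico 0 (2 * π))
    (hr₂ : ∀ j, x₂ j ∈ Set.Ico 0 (2 * π)) (hmono₁ : StrictMono x₁) (hdisj : ∀ j k, x₁ j ≠ x₂ k)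
    (k : Fin m) : sinWeight x₁ x₂ k ≠ 0 :=
  div_ne_zero (prod_ne_zero_iff.2 fun j _ => sin_half_sub_ne_zero (hr₁ k) (hr₂ j) (hdisj k j))
    (prod_ne_zero_iff.2 fun j hj =>
      sin_half_sub_ne_zero (hr₁ k) (hr₁ j) (hmono₁.injective.ne (ne_of_mem_erase hj).symm))

lemma sinWeight_pos_iff (hr₁ : ∀ j, x₁ j ∈ Set.Ico 0 (2 * π))
    (hr₂ : ∀ j, x₂ j ∈ Set.Ico 0 (2 * π)) (hmono₁ : StrictMono x₁) (hdisj : ∀ j k, x₁ j ≠ x₂ k)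
    (k : Fin m) :
    0 < sinWeight x₁ x₂ k ↔ Odd (#{j | x₂ j < x₁ k} + k) := by
  have hnum : 0 < ∏ j, Real.sin ((x₁ k - x₂ j) / 2) ↔ Even (m - #{j | x₂ j < x₁ k}) := by
    have hsplit := card_filter_add_card_filter_not (s := univ) fun j => x₂ j < x₁ k
    have hcompl : #{j | x₁ k < x₂ j} = #{j | ¬x₂ j < x₁ k} := by
      congr! 2 with j
      exact ⟨not_lt_of_gt, fun h => (not_lt.1 h).lt_of_ne (hdisj k j)⟩
    rw [prod_sin_half_sub_pos_iff (fun j _ => hr₂ j) (hr₁ k) fun j _ => hdisj k j, hcompl]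
    rw [card_univ, Fintype.card_fin] at hsplit
    rw [Nat.eq_sub_of_add_eq' hsplit]
  have hden : 0 < ∏ j ∈ univ.erase k, Real.sin ((x₁ k - x₁ j) / 2) ↔ Even (m - 1 - k) := by
    rw [prod_sin_half_sub_pos_iff (fun j _ => hr₁ j) (hr₁ k)
      fun j hj => hmono₁.injective.ne (ne_of_mem_erase hj).symm, ← Fin.card_Ioi]
    congr! 2
    ext j
    simpa [hmono₁.lt_iff_lt] using fun h => h.ne'
  obtain ⟨hnum₀, hden₀⟩ := div_ne_zero_iff.1 (sinWeight_ne_zero hr₁ hr₂ hmono₁ hdisj k)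
  rw [sinWeight, div_pos_iff_of_ne_zero hnum₀ hden₀, hnum, hden]
  have hc := card_filter_le univ fun j => x₂ j < x₁ k
  simp only [card_univ, Fintype.card_fin] at hc
  have hk := k.isLt
  simp only [Nat.even_iff, Nat.odd_iff]
  omega

end Trigonometric

theorem interlacing_criterion_general (m : ℕ) (x₁ x₂ : Fin m → ℝ)
    (hr₁ : ∀ j, 0 ≤ x₁ j ∧ x₁ j < 2 * Real.pi)
    (hr₂ : ∀ j, 0 ≤ x₂ j ∧ x₂ j < 2 * Real.pi)
    (hmono₁ : StrictMono x₁) (hmono₂ : StrictMono x₂)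
    (hdisj : ∀ j k, x₁ j ≠ x₂ k) :
    let ω : Fin m → ℝ := fun k =>
      (∏ j, Real.sin ((x₁ k - x₂ j) / 2)) /
        (∏ j ∈ Finset.univ.erase k, Real.sin ((x₁ k - x₁ j) / 2))
    (∀ k, ω k ≠ 0) ∧
    (InterlaceOnT m (Set.range fun j => Complex.exp (Complex.I * (x₁ j : ℂ)))
        (Set.range fun j => Complex.exp (Complex.I * (x₂ j : ℂ))) ↔
      ((∀ k, 0 < ω k) ∨ (∀ k, ω k < 0))) := by
  show (∀ k, sinWeight x₁ x₂ k ≠ 0) ∧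
    (_ ↔ (∀ k, 0 < sinWeight x₁ x₂ k) ∨ ∀ k, sinWeight x₁ x₂ k < 0)
  have hne := sinWeight_ne_zero hr₁ hr₂ hmono₁ hdisj
  have hpos := sinWeight_pos_iff hr₁ hr₂ hmono₁ hdisj
  have hneg : ∀ k, sinWeight x₁ x₂ k < 0 ↔ Even (#{j | x₂ j < x₁ k} + k) := fun k => by
    rw [← Nat.not_odd_iff_even, ← hpos, not_lt, (hne k).le_iff_lt]
  have hmono : Monotone fun k => #{j | x₂ j < x₁ k} := fun i k hik =>
    card_le_card fun j => by simpa using fun h => h.trans_le (hmono₁.monotone hik)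
  have hle : ∀ k, #{j | x₂ j < x₁ k} ≤ m := fun k => (card_filter_le _ _).trans_eq (by simp)
  refine ⟨hne, ?_⟩
  rw [interlaceOnT_range_iff hr₁ hr₂ hmono₁ hmono₂,
    interlaces_iff_forall_card_eq hmono₂.monotone hdisj,
    interlaces_swap_iff_forall_card_eq hmono₂.monotone hdisj, or_comm,
    ← forall_odd_add_or_forall_even_add_iff hmono hle]
  exact or_congr (forall_congr' fun k => (hpos k).symm) (forall_congr' fun k => (hneg k).symm)

/-- Proposition 3: for disjoint `m`-point sets `Z₁ = {e^{i x_{j,1}}}`,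
`Z₂ = {e^{i x_{j,2}}}` on `𝕋` (labels increasing in `[0, 2π)`), the quantities
`ω_k = ∏_j sin((x_{k,1}−x_{j,2})/2) / ∏_{j≠k} sin((x_{k,1}−x_{j,1})/2)` are nonzero, and
`Z₁`, `Z₂` interlace iff all `ω_k` have the same sign. -/
theorem interlacing_criterion (m : ℕ) (hm : 1 ≤ m) (x₁ x₂ : Fin m → ℝ)
    (hr₁ : ∀ j, 0 ≤ x₁ j ∧ x₁ j < 2 * Real.pi)
    (hr₂ : ∀ j, 0 ≤ x₂ j ∧ x₂ j < 2 * Real.pi)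
    (hmono₁ : StrictMono x₁) (hmono₂ : StrictMono x₂)
    (hdisj : ∀ j k, x₁ j ≠ x₂ k) :
    let ω : Fin m → ℝ := fun k =>
      (∏ j, Real.sin ((x₁ k - x₂ j) / 2)) /
        (∏ j ∈ Finset.univ.erase k, Real.sin ((x₁ k - x₁ j) / 2))
    (∀ k, ω k ≠ 0) ∧
    (InterlaceOnT m (Set.range fun j => Complex.exp (Complex.I * (x₁ j : ℂ)))
        (Set.range fun j => Complex.exp (Complex.I * (x₂ j : ℂ))) ↔
      ((∀ k, 0 < ω k) ∨ (∀ k, ω k < 0))) :=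
  interlacing_criterion_general m x₁ x₂ hr₁ hr₂ hmono₁ hmono₂ hdisj

end CMVPaper
end
end

section
/- Let C₁ = C(α₀,…,α_{n-3},α_{n-2};β₁) and C₂ = C(α₀,…,α_{n-3};β₂) be finite CMV matrices of orders n and n−1 respectively, with Φ_{n-1}(z) = det(zI − C₁^{(n-1)}), Φ̃_n(z) = det(zI − C₁), and Φ̃_{n-1}(z) = det(zI − C₂). Set A = conj(β₁)·ρ_{n-2}²/(conj(β₂) − conj(α_{n-2})) with ρ_{n-2}² = 1 − |α_{n-2}|², and B = conj(β₁)·β₂·(1 − conj(β₂)·α_{n-2})/(1 − β₂·conj(α_{n-2})). Then A ≠ 0, |B| = 1, and the polynomial identity Φ̃_n(z) − A·Φ̃_{n-1}(z) = (z − B)·Φ_{n-1}(z) holds. -/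
open Complex Polynomial Matrix BigOperators Finset

noncomputable section

namespace CMVPaper

/-!
Write `n = m + 2` and `C = L M`. For even `m`, `L(n)` arises from `L(n - 1)` by replacing its final
block `conj β₂` with `Θ(α_m)`, while `M(n) = M(n - 1) ⊕ (conj β₁)`; for odd `m` the same holds with
`L` and `M` exchanged, and since both factors are symmetric we may pass to `Cᵀ = M L`.
Then `z - C₁^{(n-1)}` and `z - C₂` agree except in their last rows, `z e - conj α_m u` and
`z e - conj β₂ u` for the same vector `u` (a row of the unchanged factor), and the last column of
`z - C₁` has only two nonzero entries, so its Laplace expansion involves `z - C₁^{(n-1)}` and the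
same matrix with last row `u`. Since the determinant is linear in the last row, all three
characteristic polynomials are combinations of the two determinants with last row `e` and `u`;
eliminating these gives the relation.
-/

section Bordered

variable {R : Type*} [CommRing R] {m : ℕ}

theorem det_eq_of_last_col_eq_zero (N : Matrix (Fin (m + 2)) (Fin (m + 2)) R)
    (h : ∀ i : Fin m, N i.castSucc.castSucc (Fin.last _) = 0) :
    N.det = N (Fin.last _) (Fin.last _) * (N.submatrix Fin.castSucc Fin.castSucc).det -
      N (Fin.last m).castSucc (Fin.last _) * ((N.submatrix Fin.castSucc Fin.castSucc).updateRow
        (Fin.last m) fun j => N (Fin.last _) j.castSucc).det := by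
  have hminor : N.submatrix (Fin.last m).castSucc.succAbove Fin.castSucc =
      (N.submatrix Fin.castSucc Fin.castSucc).updateRow (Fin.last m)
        fun j => N (Fin.last _) j.castSucc := by
    ext i j
    induction i using Fin.lastCases with
    | last => simp
    | cast i =>
      simp [Fin.succAbove_of_castSucc_lt _ _ (Fin.castSucc_lt_castSucc_iff.mpr i.castSucc_lt_last),
        (Fin.castSucc_lt_last i).ne]
  rw [det_succ_column N (Fin.last _), Fin.sum_univ_castSucc, Fin.sum_univ_castSucc]
  simp [h, hminor, ← two_mul, pow_mul, neg_add_eq_sub]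

/-- `X₁` and `X₂` share their first `m` rows (which vanish in the last column of `X₁`); below
them, `X₁` ends in the block `[[p, r], [r, q]]` where `X₂` ends in `(c)`. -/
structure IsThetaBordered (X₁ : Matrix (Fin (m + 2)) (Fin (m + 2)) R)
    (X₂ : Matrix (Fin (m + 1)) (Fin (m + 1)) R) (p q r c : R) : Prop where
  castSucc_castSucc :
    ∀ (i : Fin m) (k : Fin (m + 1)), X₁ i.castSucc.castSucc k.castSucc = X₂ i.castSucc k
  castSucc_last : ∀ i : Fin m, X₁ i.castSucc.castSucc (Fin.last _) = 0
  row_castSucc_last :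
    X₁ (Fin.last m).castSucc = Pi.single (Fin.last m).castSucc p + Pi.single (Fin.last _) r
  row_last : X₁ (Fin.last _) = Pi.single (Fin.last m).castSucc r + Pi.single (Fin.last _) q
  row_last₂ : X₂ (Fin.last m) = Pi.single (Fin.last m) c

/-- `Y₁ = Y₂ ⊕ (c)`. -/
structure IsCornerExtension (Y₁ : Matrix (Fin (m + 2)) (Fin (m + 2)) R)
    (Y₂ : Matrix (Fin (m + 1)) (Fin (m + 1)) R) (c : R) : Prop where
  submatrix_castSucc : Y₁.submatrix Fin.castSucc Fin.castSucc = Y₂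
  row_last : Y₁ (Fin.last _) = Pi.single (Fin.last _) c
  col_last : Y₁.col (Fin.last _) = Pi.single (Fin.last _) c

variable {X₁ Y₁ : Matrix (Fin (m + 2)) (Fin (m + 2)) R}
  {X₂ Y₂ : Matrix (Fin (m + 1)) (Fin (m + 1)) R} {p q r c₁ c₂ : R}

theorem IsCornerExtension.castSucc_last (hY : IsCornerExtension Y₁ Y₂ c₁) (k : Fin (m + 1)) :
    Y₁ k.castSucc (Fin.last _) = 0 := by
  simpa [Fin.castSucc_ne_last] using congrFun hY.col_last k.castSucc

namespace IsThetaBordered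

variable (hX : IsThetaBordered X₁ X₂ p q r c₂) (hY : IsCornerExtension Y₁ Y₂ c₁)
include hX hY

theorem mul_castSucc_castSucc (i : Fin m) (j : Fin (m + 1)) :
    (X₁ * Y₁) i.castSucc.castSucc j.castSucc = (X₂ * Y₂) i.castSucc j := by
  rw [mul_apply, mul_apply, Fin.sum_univ_castSucc, hX.castSucc_last, zero_mul, add_zero,
    ← hY.submatrix_castSucc]
  simp [hX.castSucc_castSucc]

theorem mul_castSucc_last (i : Fin m) : (X₁ * Y₁) i.castSucc.castSucc (Fin.last _) = 0 := by
  rw [mul_apply', show (fun k => Y₁ k (Fin.last _)) = Y₁.col (Fin.last _) from rfl, hY.col_last,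
    dotProduct_single, hX.castSucc_last, zero_mul]

theorem mul_row_castSucc_last :
    (X₁ * Y₁) (Fin.last m).castSucc =
      p • Y₁ (Fin.last m).castSucc + r • Pi.single (Fin.last _) c₁ := by
  rw [mul_apply_eq_vecMul, hX.row_castSucc_last, add_vecMul, single_vecMul, single_vecMul,
    ← hY.row_last]
  rfl

theorem mul_row_last :
    (X₁ * Y₁) (Fin.last _) = r • Y₁ (Fin.last m).castSucc + q • Pi.single (Fin.last _) c₁ := by
  rw [mul_apply_eq_vecMul, hX.row_last, add_vecMul, single_vecMul, single_vecMul,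
    ← hY.row_last]
  rfl

theorem mul_row_last₂ (j : Fin (m + 1)) :
    (X₂ * Y₂) (Fin.last m) j = c₂ * Y₁ (Fin.last m).castSucc j.castSucc := by
  rw [mul_apply_eq_vecMul, hX.row_last₂, single_vecMul, ← hY.submatrix_castSucc]
  rfl

theorem det_scalar_sub_mul (z : R) :
    (scalar _ z - X₁ * Y₁).det =
      (z - q * c₁) * (scalar _ z - (X₁ * Y₁).submatrix Fin.castSucc Fin.castSucc).det -
        r ^ 2 * c₁ * ((scalar _ z - (X₁ * Y₁).submatrix Fin.castSucc Fin.castSucc).updateRow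
          (Fin.last m) fun j => Y₁ (Fin.last m).castSucc j.castSucc).det := by
  set N := scalar (Fin (m + 2)) z - X₁ * Y₁ with hN
  have hrow := congrFun (hX.mul_row_castSucc_last hY)
  have hrow' := congrFun (hX.mul_row_last hY)
  simp only [Pi.add_apply, Pi.smul_apply, smul_eq_mul] at hrow hrow'
  have hN' : N.submatrix Fin.castSucc Fin.castSucc =
      scalar _ z - (X₁ * Y₁).submatrix Fin.castSucc Fin.castSucc := by
    ext i j; simp [hN, scalar_apply, diagonal_apply]
  have hlast : N (Fin.last _) (Fin.last _) = z - q * c₁ := by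
    simp [hN, hrow', hY.castSucc_last]
  have hcorner : N (Fin.last m).castSucc (Fin.last _) = -(r * c₁) := by
    simp [hN, hrow, Fin.castSucc_ne_last, hY.castSucc_last]
  have hrow_last : (fun j : Fin (m + 1) => N (Fin.last _) j.castSucc) =
      (-r) • fun j : Fin (m + 1) => Y₁ (Fin.last m).castSucc j.castSucc := by
    ext j; simp [hN, hrow', Fin.castSucc_ne_last, (Fin.castSucc_lt_last j).ne']
  rw [det_eq_of_last_col_eq_zero N fun i => by simp [hN, hX.mul_castSucc_last hY, scalar_apply,
    (Fin.castSucc_lt_last i.castSucc).ne], hN', hlast, hcorner, hrow_last, det_updateRow_smul]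
  ring

end IsThetaBordered

end Bordered

theorem IsThetaBordered.charpoly_eval_mul_sub {K : Type*} [Field K] {m : ℕ}
    {X₁ Y₁ : Matrix (Fin (m + 2)) (Fin (m + 2)) K} {X₂ Y₂ : Matrix (Fin (m + 1)) (Fin (m + 1)) K}
    {p q r c₁ c₂ : K} (hX : IsThetaBordered X₁ X₂ p q r c₂) (hY : IsCornerExtension Y₁ Y₂ c₁)
    (hc : c₂ ≠ p) (z : K) :
    (X₁ * Y₁).charpoly.eval z - c₁ * r ^ 2 / (c₂ - p) * (X₂ * Y₂).charpoly.eval z =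
      (z - c₁ * (q + r ^ 2 / (c₂ - p))) *
        ((X₁ * Y₁).submatrix Fin.castSucc Fin.castSucc).charpoly.eval z := by
  set u : Fin (m + 1) → K := fun j => Y₁ (Fin.last m).castSucc j.castSucc
  set e : Fin (m + 1) → K := Pi.single (Fin.last m) 1
  set N' := scalar (Fin (m + 1)) z - (X₁ * Y₁).submatrix Fin.castSucc Fin.castSucc
  set G : (Fin (m + 1) → K) → K := fun v => (N'.updateRow (Fin.last m) v).det
  have hG (a b : K) (v w) : G (a • v + b • w) = a * G v + b * G w := by
    simp only [G, det_updateRow_add, det_updateRow_smul]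
  have hrow := congrFun (hX.mul_row_castSucc_last hY)
  simp only [Pi.add_apply, Pi.smul_apply, smul_eq_mul] at hrow
  have hlead : N' = N'.updateRow (Fin.last m) (z • e + (-p) • u) := by
    refine (updateRow_eq_self _ _).symm.trans (congrArg _ (funext fun j => ?_))
    obtain rfl | hj := eq_or_ne j (Fin.last m)
    · simp [N', e, u, hrow, scalar_apply, Fin.castSucc_ne_last, ← sub_eq_add_neg]
    · simp [N', e, u, hrow, scalar_apply, Fin.castSucc_ne_last, hj, hj.symm]
  have hC₂ : scalar _ z - X₂ * Y₂ = N'.updateRow (Fin.last m) (z • e + (-c₂) • u) := by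
    ext i j
    induction i using Fin.lastCases with
    | last =>
      obtain rfl | hj := eq_or_ne j (Fin.last m)
      · simp [N', e, u, hX.mul_row_last₂ hY, scalar_apply, ← sub_eq_add_neg]
      · simp [N', e, u, hX.mul_row_last₂ hY, scalar_apply, hj, hj.symm]
    | cast i =>
      simp [N', (Fin.castSucc_lt_last i).ne, hX.mul_castSucc_castSucc hY, scalar_apply,
        diagonal_apply]
  rw [eval_charpoly, eval_charpoly, eval_charpoly, hX.det_scalar_sub_mul hY, hC₂]
  change (z - q * c₁) * N'.det - r ^ 2 * c₁ * G u - _ * G _ = _ * N'.det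
  rw [show N'.det = G (z • e + (-p) • u) from congrArg det hlead, hG, hG]
  field_simp [sub_ne_zero.mpr hc]
  ring

theorem isSymm_cmvL (n : ℕ) (α : ℕ → ℂ) (β : ℂ) : (cmvL n α β).IsSymm := by
  ext i j
  simp only [transpose_apply, cmvL, of_apply, Fin.ext_iff, Nat.even_iff]
  split_ifs <;> first | rfl | omega | (congr 3 <;> omega)

theorem isSymm_cmvM (n : ℕ) (α : ℕ → ℂ) (β : ℂ) : (cmvM n α β).IsSymm := by
  ext i j
  simp only [transpose_apply, cmvM, of_apply, Fin.ext_iff, Nat.odd_iff]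
  split_ifs <;> first | rfl | omega | (congr 3 <;> omega)

theorem transpose_CMVmat (n : ℕ) (α : ℕ → ℂ) (β : ℂ) :
    (CMVmat n α β)ᵀ = cmvM n α β * cmvL n α β := by
  rw [CMVmat, transpose_mul, (isSymm_cmvL n α β).eq, (isSymm_cmvM n α β).eq]

section Entries

variable (m : ℕ) (α : ℕ → ℂ) (β₁ β₂ : ℂ)

theorem cmvL_isThetaBordered (hm : Even m) :
    IsThetaBordered (cmvL (m + 2) α β₁) (cmvL (m + 1) α β₂)
      (starRingEnd ℂ (α m)) (-α m) (rhoC (α m)) (starRingEnd ℂ β₂) := by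
  rw [Nat.even_iff] at hm
  constructor <;> intros <;> (try ext) <;>
    simp only [cmvL, of_apply, Fin.ext_iff, Nat.even_iff, Pi.add_apply, Pi.single_apply,
      Fin.val_castSucc, Fin.val_last] <;>
    split_ifs <;> first | rfl | contradiction | omega | simp

theorem cmvM_isThetaBordered (hm : Odd m) :
    IsThetaBordered (cmvM (m + 2) α β₁) (cmvM (m + 1) α β₂)
      (starRingEnd ℂ (α m)) (-α m) (rhoC (α m)) (starRingEnd ℂ β₂) := by
  rw [Nat.odd_iff] at hm
  constructor <;> intros <;> (try ext) <;>
    simp only [cmvM, of_apply, Fin.ext_iff, Nat.odd_iff, Pi.add_apply, Pi.single_apply,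
      Fin.val_castSucc, Fin.val_last] <;>
    split_ifs <;> first | rfl | contradiction | omega | simp

theorem cmvM_isCornerExtension (hm : Even m) :
    IsCornerExtension (cmvM (m + 2) α β₁) (cmvM (m + 1) α β₂) (starRingEnd ℂ β₁) := by
  rw [Nat.even_iff] at hm
  constructor <;> (try ext) <;>
    simp only [cmvM, of_apply, submatrix_apply, col, transpose_apply, Fin.ext_iff, Nat.odd_iff,
      Pi.single_apply, Fin.val_castSucc, Fin.val_last] <;>
    split_ifs <;> first | rfl | contradiction | omega

theorem cmvL_isCornerExtension (hm : Odd m) :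
    IsCornerExtension (cmvL (m + 2) α β₁) (cmvL (m + 1) α β₂) (starRingEnd ℂ β₁) := by
  rw [Nat.odd_iff] at hm
  constructor <;> (try ext) <;>
    simp only [cmvL, of_apply, submatrix_apply, col, transpose_apply, Fin.ext_iff, Nat.even_iff,
      Pi.single_apply, Fin.val_castSucc, Fin.val_last] <;>
    split_ifs <;> first | rfl | contradiction | omega

end Entries

theorem charpoly_eval_CMVmat_sub (m : ℕ) (α : ℕ → ℂ) (β₁ β₂ : ℂ)
    (hc : starRingEnd ℂ β₂ ≠ starRingEnd ℂ (α m)) (z : ℂ) :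
    let A := starRingEnd ℂ β₁ * (rhoC (α m) : ℂ) ^ 2 / (starRingEnd ℂ β₂ - starRingEnd ℂ (α m))
    let B := starRingEnd ℂ β₁ *
      (-α m + (rhoC (α m) : ℂ) ^ 2 / (starRingEnd ℂ β₂ - starRingEnd ℂ (α m)))
    (CMVmat (m + 2) α β₁).charpoly.eval z - A * (CMVmat (m + 1) α β₂).charpoly.eval z =
      (z - B) * ((CMVmat (m + 2) α β₁).submatrix Fin.castSucc Fin.castSucc).charpoly.eval z := by
  intro A B
  rcases Nat.even_or_odd m with hm | hm
  · exact (cmvL_isThetaBordered m α β₁ β₂ hm).charpoly_eval_mul_sub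
      (cmvM_isCornerExtension m α β₁ β₂ hm) hc z
  · rw [← charpoly_transpose, ← charpoly_transpose (CMVmat (m + 1) α β₂),
      ← charpoly_transpose (submatrix _ _ _), transpose_submatrix, transpose_CMVmat,
      transpose_CMVmat]
    exact (cmvM_isThetaBordered m α β₁ β₂ hm).charpoly_eval_mul_sub
      (cmvL_isCornerExtension m α β₁ β₂ hm) hc z

theorem leadPrincipal_eq_submatrix {m : ℕ} (M : Matrix (Fin (m + 1)) (Fin (m + 1)) ℂ) :
    leadPrincipal M m = M.submatrix Fin.castSucc Fin.castSucc := by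
  ext i j
  simp [leadPrincipal, Fin.castSucc, Fin.castAdd, Fin.castLE]

section Coefficients

variable {a b₁ b₂ : ℂ}

theorem ofReal_rhoC_sq (ha : ‖a‖ ≤ 1) : (rhoC a : ℂ) ^ 2 = ((1 - ‖a‖ ^ 2 : ℝ) : ℂ) := by
  rw [rhoC, ← ofReal_pow, Real.sq_sqrt (by nlinarith [norm_nonneg a])]

theorem conj_sub_conj_ne_zero (ha : ‖a‖ < 1) (hb : ‖b₂‖ = 1) :
    starRingEnd ℂ b₂ - starRingEnd ℂ a ≠ 0 := by
  refine sub_ne_zero.mpr fun h => ?_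
  rw [(starRingEnd ℂ).injective h] at hb
  linarith

theorem one_sub_mul_conj_ne_zero (ha : ‖a‖ < 1) (hb : ‖b₂‖ = 1) :
    1 - b₂ * starRingEnd ℂ a ≠ 0 := by
  refine sub_ne_zero.mpr fun h => ?_
  have := congrArg norm h
  rw [norm_one, norm_mul, hb, one_mul, norm_conj] at this
  linarith

theorem norm_conj_mul_mul_div_eq_one (ha : ‖a‖ < 1) (hb₁ : ‖b₁‖ = 1) (hb₂ : ‖b₂‖ = 1) :
    ‖starRingEnd ℂ b₁ * b₂ * (1 - starRingEnd ℂ b₂ * a) / (1 - b₂ * starRingEnd ℂ a)‖ = 1 := by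
  have hconj : 1 - starRingEnd ℂ b₂ * a = starRingEnd ℂ (1 - b₂ * starRingEnd ℂ a) := by simp
  rw [norm_div, norm_mul, norm_mul, norm_conj, hb₁, hb₂, hconj, norm_conj, one_mul, one_mul,
    div_self (norm_ne_zero_iff.mpr (one_sub_mul_conj_ne_zero ha hb₂))]

theorem conj_mul_neg_add_div_eq (ha : ‖a‖ < 1) (hb₂ : ‖b₂‖ = 1) :
    starRingEnd ℂ b₁ * (-a + ((1 - ‖a‖ ^ 2 : ℝ) : ℂ) / (starRingEnd ℂ b₂ - starRingEnd ℂ a)) =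
      starRingEnd ℂ b₁ * b₂ * (1 - starRingEnd ℂ b₂ * a) / (1 - b₂ * starRingEnd ℂ a) := by
  have hb : b₂ * starRingEnd ℂ b₂ = 1 := by
    rw [mul_conj, normSq_eq_norm_sq, hb₂]; norm_num
  have hsq : ((1 - ‖a‖ ^ 2 : ℝ) : ℂ) = 1 - a * starRingEnd ℂ a := by
    rw [mul_conj, normSq_eq_norm_sq]; push_cast; ring
  rw [hsq, eq_div_iff (one_sub_mul_conj_ne_zero ha hb₂)]
  field_simp [conj_sub_conj_ne_zero ha hb₂]
  linear_combination (-(starRingEnd ℂ b₁) * (1 - a * starRingEnd ℂ b₂)) * hb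

end Coefficients

/-- formula (3.8): with
`A = conj(β₁) ρ_{n-2}² / (conj(β₂) − conj(α_{n-2})) ≠ 0` and
`B = conj(β₁) β₂ (1 − conj(β₂) α_{n-2}) / (1 − β₂ conj(α_{n-2}))`, `|B| = 1`, one has
`Φ̃_n(z) − A Φ̃_{n-1}(z) = (z − B) Φ_{n-1}(z)`. -/
theorem relation_three_eight (n : ℕ) (hn : 2 ≤ n)
    (α : ℕ → ℂ) (hα : ∀ j, j < n - 1 → ‖α j‖ < 1)
    (β₁ β₂ : ℂ) (hβ₁ : ‖β₁‖ = 1) (hβ₂ : ‖β₂‖ = 1) :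
    let A : ℂ := (starRingEnd ℂ) β₁ * ((1 - ‖α (n - 2)‖ ^ 2 : ℝ) : ℂ) /
      ((starRingEnd ℂ) β₂ - (starRingEnd ℂ) (α (n - 2)))
    let B : ℂ := (starRingEnd ℂ) β₁ * β₂ * (1 - (starRingEnd ℂ) β₂ * α (n - 2)) /
      (1 - β₂ * (starRingEnd ℂ) (α (n - 2)))
    A ≠ 0 ∧ ‖B‖ = 1 ∧
    ∀ z : ℂ,
      (Matrix.charpoly (CMVmat n α β₁)).eval z -
          A * (Matrix.charpoly (CMVmat (n - 1) α β₂)).eval z =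
        (z - B) * (PhiPoly n α β₁ (n - 1)).eval z := by
  obtain ⟨m, rfl⟩ : ∃ m, n = m + 2 := ⟨n - 2, by omega⟩
  have ha : ‖α m‖ < 1 := hα m (by omega)
  have hsq := ofReal_rhoC_sq ha.le
  have hc := conj_sub_conj_ne_zero ha hβ₂
  simp only [Nat.add_sub_cancel, show m + 2 - 1 = m + 1 from rfl]
  refine ⟨?_, norm_conj_mul_mul_div_eq_one ha hβ₁ hβ₂, fun z => ?_⟩
  · have hρ : ((1 - ‖α m‖ ^ 2 : ℝ) : ℂ) ≠ 0 :=
      ofReal_ne_zero.mpr (by nlinarith [norm_nonneg (α m)])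
    have hβ : starRingEnd ℂ β₁ ≠ 0 := by simp [← norm_ne_zero_iff, hβ₁]
    exact div_ne_zero (mul_ne_zero hβ hρ) hc
  · have key := charpoly_eval_CMVmat_sub m α β₁ β₂ (sub_ne_zero.mp hc) z
    rw [hsq, conj_mul_neg_add_div_eq ha hβ₂] at key
    rwa [PhiPoly, leadPrincipal_eq_submatrix]

end CMVPaper
end
end

section
/- Let z₁,…,z_{n-1}, z₀ be n pairwise distinct points on the unit circle 𝕋 (n ≥ 2), and let π be a complex polynomial of degree at most n−1 such that π(z_k) = 0 for k = 1,…,n−1 and π'(z₀) = 0. Then π is identically zero. -/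
/-! Since `deg π ≤ n - 1` and `π` vanishes at the `n - 1` distinct points `z_k`, these are all
of its roots. Off the roots, `z₀ π'(z₀) / π(z₀) = ∑ z₀ / (z₀ - z_k)`, and for distinct points
`a, b` on a common circle `Re (a / (a - b)) = 1/2`; so this sum has real part `(n - 1) / 2 ≠ 0`. -/

open Complex Polynomial Matrix BigOperators Finset

noncomputable section

namespace CMVPaper

lemma re_div_sub_of_norm_eq {a b : ℂ} (hab : a ≠ b) (hnorm : ‖a‖ = ‖b‖) :
    (a / (a - b)).re = 1 / 2 := by
  have hsq := congrArg (· ^ 2) hnorm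
  simp only [Complex.sq_norm, Complex.normSq_apply] at hsq
  have hd : Complex.normSq (a - b) ≠ 0 := by simpa [sub_eq_zero] using hab
  rw [Complex.div_re, ← add_div, div_eq_iff hd]
  simp only [Complex.normSq_apply, Complex.sub_re, Complex.sub_im]
  linear_combination hsq / 2

lemma roots_eq_map_of_natDegree_le_card {R ι : Type*} [CommRing R] [IsDomain R]
    [Fintype ι] {p : R[X]} (hp : p ≠ 0) {z : ι → R} (hz : Function.Injective z)
    (hdeg : p.natDegree ≤ Fintype.card ι) (hroots : ∀ i, p.IsRoot (z i)) :
    p.roots = Finset.univ.val.map z := by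
  have hle : Finset.univ.val.map z ≤ p.roots :=
    (Multiset.le_iff_subset (Finset.univ.nodup.map hz)).2 fun w hw => by
      obtain ⟨i, -, rfl⟩ := Multiset.mem_map.1 hw
      exact (mem_roots hp).2 (hroots i)
  refine (Multiset.eq_of_le_of_card_le hle ?_).symm
  simpa using (card_roots' p).trans hdeg

lemma eval_derivative_ne_zero_of_roots_norm_eq {p : ℂ[X]} {x : ℂ}
    (hroots : ∀ w ∈ p.roots, ‖w‖ = ‖x‖) (hx : ¬ p.IsRoot x) (hp : p.roots ≠ 0) :
    p.derivative.eval x ≠ 0 := by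
  rw [(IsAlgClosed.splits p).eval_derivative_eq_eval_mul_sum hx]
  refine mul_ne_zero hx fun hsum => ?_
  have hre :
      (x * (p.roots.map fun w => 1 / (x - w)).sum).re = Multiset.card p.roots * (1 / 2) := by
    rw [← Multiset.sum_map_mul_left]
    change Complex.reAddGroupHom _ = _
    rw [map_multiset_sum, Multiset.map_map, Multiset.map_congr rfl fun w hw => ?_,
      Multiset.map_const', Multiset.sum_replicate, nsmul_eq_mul]
    have hxw : x ≠ w := fun h => hx (h ▸ isRoot_of_mem_roots hw)
    change (x * (1 / (x - w))).re = 1 / 2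
    rw [mul_one_div]
    exact re_div_sub_of_norm_eq hxw (hroots w hw).symm
  rw [hsum, mul_zero, Complex.zero_re] at hre
  have : (0 : ℝ) < Multiset.card p.roots := by exact_mod_cast Multiset.card_pos.2 hp
  linarith

/-- if `z₁,…,z_{n-1}, z₀` are `n` pairwise distinct points on the unit circle
and `p` is a polynomial with `deg p ≤ n−1`, `p(z_k) = 0` for `k = 1,…,n−1` and `p'(z₀) = 0`,
then `p = 0`. -/
theorem vanishing_from_circle_roots (n : ℕ) (hn : 2 ≤ n)
    (z : Fin (n - 1) → ℂ) (z₀ : ℂ)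
    (hz : ∀ j, ‖z j‖ = 1) (hz₀ : ‖z₀‖ = 1)
    (hinj : Function.Injective z) (hne : ∀ j, z₀ ≠ z j)
    (p : Polynomial ℂ) (hdeg : p.degree ≤ (n - 1 : ℕ))
    (hroots : ∀ j, p.eval (z j) = 0)
    (hder : (Polynomial.derivative p).eval z₀ = 0) :
    p = 0 := by
  by_contra hp
  have hroots_eq : p.roots = Finset.univ.val.map z :=
    roots_eq_map_of_natDegree_le_card hp hinj
      (by simpa using natDegree_le_of_degree_le hdeg) hroots
  refine eval_derivative_ne_zero_of_roots_norm_eq (fun w hw => ?_) (fun h0 => ?_) ?_ hder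
  · obtain ⟨j, -, rfl⟩ := Multiset.mem_map.1 (hroots_eq ▸ hw)
    rw [hz j, hz₀]
  · obtain ⟨j, -, hj⟩ := Multiset.mem_map.1 (hroots_eq ▸ (mem_roots hp).2 h0)
    exact hne j hj.symm
  · rw [hroots_eq, ← Multiset.card_pos, Multiset.card_map]
    simp only [Finset.card_val, Finset.card_univ, Fintype.card_fin]
    omega

end CMVPaper
end
end

section
/- Let C = C(α₀,…,α_{n-2};β) be a finite CMV matrix of order n and τ ∈ 𝕋. Then the finite CMV matrix C_τ = C(α₀τ, α₁τ², …, α_{n-2}τ^{n-1}; βτⁿ) satisfies det(zI − C_τ) = τ^{-n}·det(τz·I − C); consequently Σ(C_τ) = τ^{-1}·Σ(C) = {τ^{-1}ζ : ζ ∈ Σ(C)}. -/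
/-!
Let `D = diag(τ^{e_0}, τ^{e_1}, …)` with `e = (0, 1, -1, 2, -2, …)`. By parity,
`e_k + e_{k+1}` is `1` for even `k` and `0` for odd `k`, while `2 e_k` is `-k` for even `k`
and `k + 1` for odd `k`; these are exactly the powers of `τ` by which the entries of the blocks
`Θ(α_k τ^{k+1})` differ from those of `Θ(α_k)`. Hence `L_τ = τ⁻¹ D L D` and
`M_τ = D⁻¹ M D⁻¹`, so `C_τ = D (τ⁻¹ C) D⁻¹` has the characteristic polynomial of `τ⁻¹ C`.
-/

open Complex Polynomial Matrix BigOperators Finset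

noncomputable section

namespace CMVPaper

theorem _root_.Matrix.charpoly_inv_smul_eval {K m : Type*} [Field K] [Fintype m] [DecidableEq m]
    {c : K} (hc : c ≠ 0) (A : Matrix m m K) (z : K) :
    (c⁻¹ • A).charpoly.eval z = c⁻¹ ^ Fintype.card m * A.charpoly.eval (c * z) := by
  have : scalar m z - c⁻¹ • A = c⁻¹ • (scalar m (c * z) - A) := by
    rw [smul_sub, scalar_apply, scalar_apply, ← diagonal_smul, Pi.smul_def]
    simp only [smul_eq_mul, inv_mul_cancel_left₀ hc]
  rw [eval_charpoly, eval_charpoly, this, det_smul]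

theorem specSet_inv_smul {n : ℕ} {c : ℂ} (hc : c ≠ 0) (A : Matrix (Fin n) (Fin n) ℂ) :
    specSet (c⁻¹ • A) = (fun ζ => c⁻¹ * ζ) '' specSet A := by
  ext z
  simp only [specSet, Set.mem_image, Set.mem_ofPred_eq, charpoly_inv_smul_eval hc,
    mul_eq_zero, pow_eq_zero_iff', inv_eq_zero, hc, false_and, false_or]
  constructor
  · intro h
    exact ⟨c * z, h, inv_mul_cancel_left₀ hc z⟩
  · rintro ⟨w, hw, rfl⟩
    rwa [mul_inv_cancel_left₀ hc]

def rotExp (i : ℕ) : ℤ := if Even i then -((i / 2 : ℕ) : ℤ) else (i / 2 : ℕ) + 1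

theorem rotExp_add_rotExp_succ_of_even {i : ℕ} (hi : Even i) : rotExp i + rotExp (i + 1) = 1 := by
  simp only [rotExp, hi, Nat.even_add_one, not_true_eq_false, if_true, if_false]
  obtain ⟨k, rfl⟩ := hi
  omega

theorem rotExp_add_rotExp_succ_of_odd {i : ℕ} (hi : Odd i) : rotExp i + rotExp (i + 1) = 0 := by
  simp only [rotExp, Nat.not_even_iff_odd.mpr hi, Nat.even_add_one, not_false_eq_true, if_true,
    if_false]
  obtain ⟨k, rfl⟩ := hi
  omega

theorem rotExp_add_self_of_even {i : ℕ} (hi : Even i) : rotExp i + rotExp i = -i := by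
  simp only [rotExp, hi, if_true]
  obtain ⟨k, rfl⟩ := hi
  omega

theorem rotExp_add_self_of_odd {i : ℕ} (hi : Odd i) : rotExp i + rotExp i = i + 1 := by
  simp only [rotExp, Nat.not_even_iff_odd.mpr hi, if_false]
  obtain ⟨k, rfl⟩ := hi
  omega

theorem conj_pow_of_norm_eq_one {τ : ℂ} (hτ : ‖τ‖ = 1) (k : ℕ) :
    starRingEnd ℂ (τ ^ k) = τ ^ (-(k : ℤ)) := by
  rw [map_pow, ← inv_eq_conj hτ, _root_.zpow_neg, zpow_natCast, inv_pow]

theorem rhoC_mul_pow_of_norm_eq_one {τ : ℂ} (hτ : ‖τ‖ = 1) (a : ℂ) (k : ℕ) :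
    rhoC (a * τ ^ k) = rhoC a := by
  rw [rhoC, norm_mul, norm_pow, hτ, one_pow, mul_one, rhoC]

def rotDiag (τ : ℂ) (n : ℕ) : Matrix (Fin n) (Fin n) ℂ := diagonal fun i => τ ^ rotExp i

theorem rotDiag_inv_mul_rotDiag {τ : ℂ} (hτ : τ ≠ 0) (n : ℕ) :
    rotDiag τ⁻¹ n * rotDiag τ n = 1 := by
  simp only [rotDiag, diagonal_mul_diagonal, ← mul_zpow, inv_mul_cancel₀ hτ, _root_.one_zpow,
    diagonal_one]

theorem cmvL_rotate {τ : ℂ} (hτ : ‖τ‖ = 1) (n : ℕ) (α : ℕ → ℂ) (β : ℂ) :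
    cmvL n (fun k => α k * τ ^ (k + 1)) (β * τ ^ n) =
      τ⁻¹ • (rotDiag τ n * cmvL n α β * rotDiag τ n) := by
  have hτ0 : τ ≠ 0 := norm_ne_zero_iff.mp (hτ ▸ one_ne_zero)
  ext i j
  have hin : (i : ℕ) < n := i.isLt
  have hscale (x : ℂ) :
      τ⁻¹ * (τ ^ rotExp i * x * τ ^ rotExp j) = τ ^ (rotExp i + rotExp j - 1) * x := by
    rw [zpow_sub₀ hτ0, zpow_add₀ hτ0, zpow_one]
    field_simp
  rw [Matrix.smul_apply, rotDiag, mul_diagonal, diagonal_mul, smul_eq_mul, hscale]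
  simp only [cmvL, of_apply]
  split_ifs with hev hlast _ _ hsucc hpred _
  · subst j
    rw [map_mul, conj_pow_of_norm_eq_one hτ, rotExp_add_self_of_even hev, mul_comm]
    congr 2
    omega
  · exact (mul_zero _).symm
  · subst j
    rw [map_mul, conj_pow_of_norm_eq_one hτ, rotExp_add_self_of_even hev, mul_comm, Nat.cast_succ,
      neg_add']
  · rw [rhoC_mul_pow_of_norm_eq_one hτ, show (j : ℕ) = i + 1 from hsucc,
      rotExp_add_rotExp_succ_of_even hev, sub_self, zpow_zero, one_mul]
  · exact (mul_zero _).symm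
  · have hj : Even (j : ℕ) := by simpa [← hpred, Nat.even_add_one] using hev
    rw [rhoC_mul_pow_of_norm_eq_one hτ, ← hpred, add_comm (rotExp _),
      rotExp_add_rotExp_succ_of_even hj, sub_self, zpow_zero, one_mul]
  · subst j
    have hi : Odd (i : ℕ) := Nat.not_even_iff_odd.mp hev
    rw [Nat.sub_add_cancel hi.pos, rotExp_add_self_of_odd hi, add_sub_cancel_right,
      zpow_natCast, mul_neg, mul_comm]
  · exact (mul_zero _).symm

theorem cmvM_rotate {τ : ℂ} (hτ : ‖τ‖ = 1) (n : ℕ) (α : ℕ → ℂ) (β : ℂ) :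
    cmvM n (fun k => α k * τ ^ (k + 1)) (β * τ ^ n) =
      rotDiag τ⁻¹ n * cmvM n α β * rotDiag τ⁻¹ n := by
  have hτ0 : τ ≠ 0 := norm_ne_zero_iff.mp (hτ ▸ one_ne_zero)
  ext i j
  have hin : (i : ℕ) < n := i.isLt
  have hscale (x : ℂ) :
      τ⁻¹ ^ rotExp i * x * τ⁻¹ ^ rotExp j = τ ^ (-(rotExp i + rotExp j)) * x := by
    rw [_root_.inv_zpow', _root_.inv_zpow', neg_add, zpow_add₀ hτ0]
    ring
  rw [rotDiag, mul_diagonal, diagonal_mul, hscale]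
  simp only [cmvM, of_apply]
  split_ifs with hzero _ hodd hlast _ _ hsucc hpred _
  · subst j
    rw [hzero, rotExp_add_self_of_even Even.zero]
    simp
  · exact (mul_zero _).symm
  · subst j
    rw [map_mul, conj_pow_of_norm_eq_one hτ, rotExp_add_self_of_odd hodd, mul_comm]
    congr 2
    omega
  · exact (mul_zero _).symm
  · subst j
    rw [map_mul, conj_pow_of_norm_eq_one hτ, rotExp_add_self_of_odd hodd, mul_comm, Nat.cast_succ]
  · rw [rhoC_mul_pow_of_norm_eq_one hτ, show (j : ℕ) = i + 1 from hsucc,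
      rotExp_add_rotExp_succ_of_odd hodd, neg_zero, zpow_zero, one_mul]
  · exact (mul_zero _).symm
  · have hj : Odd (j : ℕ) := by simpa [← hpred, Nat.odd_add_one] using hodd
    rw [rhoC_mul_pow_of_norm_eq_one hτ, ← hpred, add_comm (rotExp _),
      rotExp_add_rotExp_succ_of_odd hj, neg_zero, zpow_zero, one_mul]
  · subst j
    have hi : Even (i : ℕ) := Nat.not_odd_iff_even.mp hodd
    rw [Nat.sub_add_cancel (Nat.one_le_iff_ne_zero.mpr hzero), rotExp_add_self_of_even hi,
      neg_neg, zpow_natCast, mul_neg, mul_comm]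
  · exact (mul_zero _).symm

theorem _root_.Matrix.charpoly_mul_mul_of_mul_eq_one {R m : Type*} [CommRing R] [Fintype m] [DecidableEq m]
    {P Q : Matrix m m R} (h : Q * P = 1) (A : Matrix m m R) :
    (P * A * Q).charpoly = A.charpoly := by
  rw [charpoly_mul_comm, ← Matrix.mul_assoc, h, Matrix.one_mul]

theorem CMVmat_rotate {τ : ℂ} (hτ : ‖τ‖ = 1) (n : ℕ) (α : ℕ → ℂ) (β : ℂ) :
    CMVmat n (fun k => α k * τ ^ (k + 1)) (β * τ ^ n) =
      rotDiag τ n * (τ⁻¹ • CMVmat n α β) * rotDiag τ⁻¹ n := by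
  have hD : rotDiag τ n * rotDiag τ⁻¹ n = 1 := by
    simpa using rotDiag_inv_mul_rotDiag (inv_ne_zero (norm_ne_zero_iff.mp (hτ ▸ one_ne_zero))) n
  rw [CMVmat, CMVmat, cmvL_rotate hτ, cmvM_rotate hτ, Matrix.mul_smul, smul_mul_assoc,
    smul_mul_assoc]
  simp only [Matrix.mul_assoc]
  rw [← Matrix.mul_assoc (rotDiag τ n) (rotDiag τ⁻¹ n), hD, Matrix.one_mul]

theorem rotation_of_spectrum_general (n : ℕ) (α : ℕ → ℂ) (β : ℂ) (τ : ℂ) (hτ : ‖τ‖ = 1) :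
    (∀ z : ℂ,
      (Matrix.charpoly (CMVmat n (fun k => α k * τ ^ (k + 1)) (β * τ ^ n))).eval z =
        τ⁻¹ ^ n * (Matrix.charpoly (CMVmat n α β)).eval (τ * z)) ∧
    specSet (CMVmat n (fun k => α k * τ ^ (k + 1)) (β * τ ^ n)) =
      (fun ζ => τ⁻¹ * ζ) '' specSet (CMVmat n α β) := by
  have hτ0 : τ ≠ 0 := norm_ne_zero_iff.mp (hτ ▸ one_ne_zero)
  have hchar : (CMVmat n (fun k => α k * τ ^ (k + 1)) (β * τ ^ n)).charpoly =
      (τ⁻¹ • CMVmat n α β).charpoly := by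
    rw [CMVmat_rotate hτ, charpoly_mul_mul_of_mul_eq_one (rotDiag_inv_mul_rotDiag hτ0 n)]
  refine ⟨fun z => ?_, ?_⟩
  · rw [hchar, charpoly_inv_smul_eval hτ0, Fintype.card_fin]
  · rw [← specSet_inv_smul hτ0, specSet, specSet, hchar]

/-- Example 1: rotating the Verblunsky coefficients,
`C_τ = C(α₀τ, α₁τ², …, α_{n-2}τ^{n-1}; βτⁿ)` satisfies
`det (zI − C_τ) = τ^{−n} det (τz·I − C)`, so `Σ(C_τ) = τ^{−1} Σ(C)`. -/
theorem rotation_of_spectrum (n : ℕ) (hn : 2 ≤ n)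
    (α : ℕ → ℂ) (hα : ∀ j, j < n - 1 → ‖α j‖ < 1)
    (β : ℂ) (hβ : ‖β‖ = 1)
    (τ : ℂ) (hτ : ‖τ‖ = 1) :
    (∀ z : ℂ,
      (Matrix.charpoly (CMVmat n (fun k => α k * τ ^ (k + 1)) (β * τ ^ n))).eval z =
        τ⁻¹ ^ n * (Matrix.charpoly (CMVmat n α β)).eval (τ * z)) ∧
    specSet (CMVmat n (fun k => α k * τ ^ (k + 1)) (β * τ ^ n)) =
      (fun ζ => τ⁻¹ * ζ) '' specSet (CMVmat n α β) :=
  rotation_of_spectrum_general n α β τ hτ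

end CMVPaper
end
end
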